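/- arXiv:2205.06033 — 5 statements merged into one kernel-verified Lean document; each statement's English description precedes it below -/
import Mathlib

section
/- Let L and s be positive integers and let V ⊆ {s+1, ..., L+s} be a set with at least two elements. Then for every integer N ≥ 2(L+s)^7 + (L+s)^5, the number of partitions of N lying in I_{L,s,V} is at most the number of partitions of N lying in D_{L,s}. -/
namespace IUB

open Multiset

structure Ctx where
  s : ℕ
  L : ℕ
  v1 : ℕ
  v2 : ℕ
  w1 : ℕ
  w2 : ℕ
  V : Finset ℕ

namespace Ctx

variable (C : Ctx)

def P : ℕ := C.L + C.s
def g : ℕ := Nat.gcd C.v1 C.v2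
def A : Finset ℕ := Finset.Icc (C.s+1) (C.L+C.s) \ C.V
def Cap : ℕ := C.g * (C.L + 1)
def T2 : ℕ := C.v1 * C.v2 * (C.Cap + 1)
def X1 : ℕ := C.T2 + 2 * C.g * C.P

noncomputable def zk1 (c : ℕ) : ℕ :=
  ((Nat.gcdA C.w1 C.w2 : ZMod C.g) * ((Nat.gcd C.w1 C.w2 : ℕ) : ZMod C.g)⁻¹ * (c : ZMod C.g)).val
noncomputable def zk2 (c : ℕ) : ℕ :=
  ((Nat.gcdB C.w1 C.w2 : ZMod C.g) * ((Nat.gcd C.w1 C.w2 : ℕ) : ZMod C.g)⁻¹ * (c : ZMod C.g)).val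
noncomputable def zz (c : ℕ) : ℕ := C.zk1 c * C.w1 + C.zk2 c * C.w2

noncomputable def a0 (T : ℕ) : ℕ :=
  (((T / C.g : ℕ) : ZMod (C.v2 / C.g)) * ((C.v1 / C.g : ℕ) : ZMod (C.v2 / C.g))⁻¹).val

noncomputable def heavy (R : Multiset ℕ) : ℕ :=
  if h : ((C.A).filter (fun x => C.X1 ≤ R.count x)).Nonempty then
    ((C.A).filter (fun x => C.X1 ≤ R.count x)).min' h else 0

noncomputable def chunk (m : ℕ) (R : Multiset ℕ) : ℕ :=
  if C.X1 ≤ m * C.s then m * C.s else m * C.s + C.X1 * C.heavy R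

noncomputable def jdx (m : ℕ) (R : Multiset ℕ) : ℕ :=
  if C.X1 ≤ m * C.s then C.chunk m R % C.g
  else C.g + (((C.A).sort (· ≤ ·)).idxOf (C.heavy R)) * C.g + C.chunk m R % C.g

noncomputable def T (m : ℕ) (R : Multiset ℕ) : ℕ := C.chunk m R - C.zz (C.chunk m R)

noncomputable def av (m : ℕ) (R : Multiset ℕ) : ℕ := C.a0 (C.T m R) + C.jdx m R * (C.v2 / C.g)

noncomputable def bv (m : ℕ) (R : Multiset ℕ) : ℕ := (C.T m R - C.av m R * C.v1) / C.v2

noncomputable def R' (m : ℕ) (R : Multiset ℕ) : Multiset ℕ :=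
  if C.X1 ≤ m * C.s then R else R - Multiset.replicate C.X1 (C.heavy R)

noncomputable def phi (m : ℕ) (R : Multiset ℕ) : Multiset ℕ :=
  C.R' m R + Multiset.replicate (C.zk1 (C.chunk m R)) C.w1
    + Multiset.replicate (C.zk2 (C.chunk m R)) C.w2
    + Multiset.replicate (C.av m R) C.v1 + Multiset.replicate (C.bv m R) C.v2

structure Good : Prop where
  hs : 0 < C.s
  hL3 : 3 ≤ C.L
  hVsub : C.V ⊆ Finset.Icc (C.s+1) (C.L+C.s)
  hv1 : C.v1 ∈ C.V
  hv2 : C.v2 ∈ C.V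
  hvne : C.v1 ≠ C.v2
  hw1 : C.w1 ∈ C.A
  hw2 : C.w2 ∈ C.A
  hco : Nat.Coprime (Nat.gcd C.w1 C.w2) C.g

variable {C}

lemma Good.v1_mem_Icc (hG : C.Good) : C.v1 ∈ Finset.Icc (C.s+1) (C.L+C.s) := hG.hVsub hG.hv1
lemma Good.v2_mem_Icc (hG : C.Good) : C.v2 ∈ Finset.Icc (C.s+1) (C.L+C.s) := hG.hVsub hG.hv2
lemma Good.v1_pos (hG : C.Good) : 0 < C.v1 :=
  lt_of_lt_of_le (Nat.succ_pos _) (Finset.mem_Icc.mp hG.v1_mem_Icc).1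
lemma Good.v2_pos (hG : C.Good) : 0 < C.v2 :=
  lt_of_lt_of_le (Nat.succ_pos _) (Finset.mem_Icc.mp hG.v2_mem_Icc).1
lemma Good.v1_le (hG : C.Good) : C.v1 ≤ C.P := (Finset.mem_Icc.mp hG.v1_mem_Icc).2
lemma Good.v2_le (hG : C.Good) : C.v2 ≤ C.P := (Finset.mem_Icc.mp hG.v2_mem_Icc).2
lemma Good.g_pos (hG : C.Good) : 0 < C.g := Nat.gcd_pos_of_pos_left _ hG.v1_pos
lemma g_dvd_v1 : C.g ∣ C.v1 := Nat.gcd_dvd_left _ _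
lemma g_dvd_v2 : C.g ∣ C.v2 := Nat.gcd_dvd_right _ _
lemma Good.g_le (hG : C.Good) : C.g ≤ C.P :=
  le_trans (Nat.le_of_dvd hG.v1_pos g_dvd_v1) hG.v1_le
lemma Good.v2g_pos (hG : C.Good) : 0 < C.v2 / C.g :=
  Nat.div_pos (Nat.le_of_dvd hG.v2_pos g_dvd_v2) hG.g_pos

lemma mem_A_iff {x : ℕ} : x ∈ C.A ↔ (C.s+1 ≤ x ∧ x ≤ C.L + C.s ∧ x ∉ C.V) := by
  simp [Ctx.A, Finset.mem_sdiff, Finset.mem_Icc, and_assoc]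

lemma Good.w1_notV (hG : C.Good) : C.w1 ∉ C.V := (mem_A_iff.mp hG.hw1).2.2
lemma Good.w2_notV (hG : C.Good) : C.w2 ∉ C.V := (mem_A_iff.mp hG.hw2).2.2
lemma Good.w1_le (hG : C.Good) : C.w1 ≤ C.P := (mem_A_iff.mp hG.hw1).2.1
lemma Good.w2_le (hG : C.Good) : C.w2 ≤ C.P := (mem_A_iff.mp hG.hw2).2.1
lemma Good.w1_ne_v1 (hG : C.Good) : C.w1 ≠ C.v1 := fun h => hG.w1_notV (h ▸ hG.hv1)
lemma Good.w1_ne_v2 (hG : C.Good) : C.w1 ≠ C.v2 := fun h => hG.w1_notV (h ▸ hG.hv2)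
lemma Good.w2_ne_v1 (hG : C.Good) : C.w2 ≠ C.v1 := fun h => hG.w2_notV (h ▸ hG.hv1)
lemma Good.w2_ne_v2 (hG : C.Good) : C.w2 ≠ C.v2 := fun h => hG.w2_notV (h ▸ hG.hv2)

lemma Good.X1_pos (hG : C.Good) : 0 < C.X1 := by
  have h1 : 0 < C.T2 := by
    unfold T2
    exact Nat.mul_pos (Nat.mul_pos hG.v1_pos hG.v2_pos) (Nat.succ_pos _)
  unfold X1
  omega

lemma Good.zk1_lt (hG : C.Good) (c : ℕ) : C.zk1 c < C.g := by
  haveI : NeZero C.g := ⟨hG.g_pos.ne'⟩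
  exact ZMod.val_lt _

lemma Good.zk2_lt (hG : C.Good) (c : ℕ) : C.zk2 c < C.g := by
  haveI : NeZero C.g := ⟨hG.g_pos.ne'⟩
  exact ZMod.val_lt _

lemma Good.zz_mod (hG : C.Good) (c : ℕ) : C.zz c % C.g = c % C.g := by
  haveI : NeZero C.g := ⟨hG.g_pos.ne'⟩
  apply (ZMod.natCast_eq_natCast_iff _ _ _).mp
  have h1 : ((C.zk1 c : ℕ) : ZMod C.g)
      = (Nat.gcdA C.w1 C.w2 : ZMod C.g) * ((Nat.gcd C.w1 C.w2 : ℕ) : ZMod C.g)⁻¹ * (c : ZMod C.g) :=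
    ZMod.natCast_rightInverse _
  have h2 : ((C.zk2 c : ℕ) : ZMod C.g)
      = (Nat.gcdB C.w1 C.w2 : ZMod C.g) * ((Nat.gcd C.w1 C.w2 : ℕ) : ZMod C.g)⁻¹ * (c : ZMod C.g) :=
    ZMod.natCast_rightInverse _
  have hbez : ((Nat.gcd C.w1 C.w2 : ℕ) : ZMod C.g)
      = (C.w1 : ZMod C.g) * (Nat.gcdA C.w1 C.w2 : ZMod C.g)
        + (C.w2 : ZMod C.g) * (Nat.gcdB C.w1 C.w2 : ZMod C.g) := by
    have hh := Nat.gcd_eq_gcd_ab C.w1 C.w2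
    have h3 : (((Nat.gcd C.w1 C.w2 : ℕ) : ℤ) : ZMod C.g)
        = (((C.w1 : ℤ) * Nat.gcdA C.w1 C.w2 + (C.w2 : ℤ) * Nat.gcdB C.w1 C.w2 : ℤ) : ZMod C.g) := by
      exact_mod_cast congrArg (fun z : ℤ => (z : ZMod C.g)) hh
    push_cast at h3 ⊢
    exact h3
  have hone : ((Nat.gcd C.w1 C.w2 : ℕ) : ZMod C.g) * ((Nat.gcd C.w1 C.w2 : ℕ) : ZMod C.g)⁻¹ = 1 :=
    ZMod.coe_mul_inv_eq_one _ hG.hco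
  show ((C.zk1 c * C.w1 + C.zk2 c * C.w2 : ℕ) : ZMod C.g) = (c : ZMod C.g)
  push_cast
  rw [h1, h2]
  linear_combination (-(c : ZMod C.g) * ((Nat.gcd C.w1 C.w2 : ℕ) : ZMod C.g)⁻¹) * hbez
    + (c : ZMod C.g) * hone

lemma Good.zz_le (hG : C.Good) (c : ℕ) : C.zz c ≤ 2 * C.g * C.P := by
  have h1 : C.zk1 c * C.w1 ≤ C.g * C.P :=
    Nat.mul_le_mul (le_of_lt (hG.zk1_lt c)) hG.w1_le
  have h2 : C.zk2 c * C.w2 ≤ C.g * C.P :=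
    Nat.mul_le_mul (le_of_lt (hG.zk2_lt c)) hG.w2_le
  have h3 : 2 * C.g * C.P = C.g * C.P + C.g * C.P := by ring
  unfold zz
  omega

lemma Good.a0_lt (hG : C.Good) (t : ℕ) : C.a0 t < C.v2 / C.g := by
  haveI : NeZero (C.v2 / C.g) := ⟨hG.v2g_pos.ne'⟩
  exact ZMod.val_lt _

lemma Good.a0_modeq (hG : C.Good) {t : ℕ} (hdvd : C.g ∣ t) :
    C.a0 t * C.v1 ≡ t [MOD C.v2] := by
  have hgpos := hG.g_pos
  haveI : NeZero (C.v2 / C.g) := ⟨hG.v2g_pos.ne'⟩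
  have hco : Nat.Coprime (C.v1 / C.g) (C.v2 / C.g) := Nat.coprime_div_gcd_div_gcd hgpos
  have hone : ((C.v1 / C.g : ℕ) : ZMod (C.v2/C.g)) * ((C.v1 / C.g : ℕ) : ZMod (C.v2/C.g))⁻¹ = 1 :=
    ZMod.coe_mul_inv_eq_one _ hco
  have ha : ((C.a0 t : ℕ) : ZMod (C.v2/C.g))
      = ((t / C.g : ℕ) : ZMod (C.v2/C.g)) * ((C.v1 / C.g : ℕ) : ZMod (C.v2/C.g))⁻¹ :=
    ZMod.natCast_rightInverse _
  have h1' : ((C.a0 t * (C.v1 / C.g) : ℕ) : ZMod (C.v2/C.g)) = ((t / C.g : ℕ) : ZMod (C.v2/C.g)) := by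
    push_cast
    rw [ha]
    linear_combination ((t / C.g : ℕ) : ZMod (C.v2/C.g)) * hone
  have h2' : C.a0 t * (C.v1 / C.g) ≡ t / C.g [MOD C.v2 / C.g] :=
    (ZMod.natCast_eq_natCast_iff _ _ _).mp h1'
  have h3 := Nat.ModEq.mul_right' C.g h2'
  rw [mul_assoc, Nat.div_mul_cancel (g_dvd_v1 (C := C)), Nat.div_mul_cancel hdvd,
    Nat.div_mul_cancel (g_dvd_v2 (C := C))] at h3
  exact h3


lemma Good.key_mul (hG : C.Good) : (C.v2 / C.g) * C.v1 = (C.v1 / C.g) * C.v2 := by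
  obtain ⟨c1, e1⟩ := g_dvd_v1 (C := C)
  obtain ⟨c2, e2⟩ := g_dvd_v2 (C := C)
  rw [e1, e2, Nat.mul_div_cancel_left _ hG.g_pos, Nat.mul_div_cancel_left _ hG.g_pos]
  ring

lemma Good.ab_eq (hG : C.Good) {t j : ℕ} (hdvd : C.g ∣ t) (ht : C.T2 ≤ t) (hj : j < C.Cap) :
    (C.a0 t + j * (C.v2 / C.g)) * C.v1 + ((t - (C.a0 t + j * (C.v2 / C.g)) * C.v1) / C.v2) * C.v2 = t
      ∧ (C.a0 t + j * (C.v2 / C.g)) / (C.v2 / C.g) = j := by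
  set a := C.a0 t + j * (C.v2 / C.g) with hadef
  have hq : 0 < C.v2 / C.g := hG.v2g_pos
  have ha0 : C.a0 t < C.v2 / C.g := hG.a0_lt t
  -- bound : a * v1 ≤ t
  have hb1 : a < (j+1) * (C.v2 / C.g) := by
    rw [hadef]
    calc C.a0 t + j * (C.v2 / C.g) < (C.v2 / C.g) + j * (C.v2 / C.g) := by omega
    _ = (j+1) * (C.v2 / C.g) := by ring
  have hb2 : a * C.v1 < C.T2 := by
    have h1 : a * C.v1 < ((j+1) * (C.v2 / C.g)) * C.v1 :=
      Nat.mul_lt_mul_of_lt_of_le hb1 (le_refl _) hG.v1_pos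
    have h2 : ((j+1) * (C.v2 / C.g)) * C.v1 ≤ C.Cap * C.v2 * C.v1 := by
      have : C.v2 / C.g ≤ C.v2 := Nat.div_le_self _ _
      have hj1 : j + 1 ≤ C.Cap := hj
      calc ((j+1) * (C.v2 / C.g)) * C.v1 ≤ (C.Cap * C.v2) * C.v1 := by
            exact Nat.mul_le_mul (Nat.mul_le_mul hj1 this) (le_refl _)
      _ = C.Cap * C.v2 * C.v1 := rfl
    have h3 : C.Cap * C.v2 * C.v1 < C.T2 := by
      unfold T2
      have hvv : 0 < C.v1 * C.v2 := Nat.mul_pos hG.v1_pos hG.v2_pos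
      nlinarith
    omega
  have hale : a * C.v1 ≤ t := le_trans (le_of_lt hb2) ht
  -- modular equation
  have hmod : a * C.v1 ≡ t [MOD C.v2] := by
    have h0 : a * C.v1 = C.a0 t * C.v1 + (j * (C.v1 / C.g)) * C.v2 := by
      rw [hadef, add_mul, mul_assoc, mul_assoc, hG.key_mul]
    have h1 : a * C.v1 % C.v2 = C.a0 t * C.v1 % C.v2 := by
      rw [h0]
      exact Nat.add_mul_mod_self_right _ _ _
    exact Nat.ModEq.trans h1 (hG.a0_modeq hdvd)
  have hdvd2 : C.v2 ∣ t - a * C.v1 := (Nat.modEq_iff_dvd' hale).mp hmod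
  constructor
  · rw [Nat.div_mul_cancel hdvd2]
    omega
  · rw [hadef, Nat.add_mul_div_right _ _ hq, Nat.div_eq_of_lt ha0, Nat.zero_add]

lemma Good.A_card (hG : C.Good) : (C.A).card ≤ C.L := by
  have h1 : C.A ⊆ Finset.Icc (C.s+1) (C.L+C.s) := Finset.sdiff_subset
  calc (C.A).card ≤ (Finset.Icc (C.s+1) (C.L+C.s)).card := Finset.card_le_card h1
  _ = C.L := by rw [Nat.card_Icc]; omega

lemma Good.heavy_spec (hG : C.Good) {R : Multiset ℕ} (hR : ∀ x ∈ R, x ∈ C.A)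
    (hsum : C.X1 * (C.L * C.P) ≤ R.sum) :
    C.heavy R ∈ C.A ∧ C.X1 ≤ R.count (C.heavy R) := by
  have hne : ((C.A).filter (fun x => C.X1 ≤ R.count x)).Nonempty := by
    by_contra hempty
    rw [Finset.not_nonempty_iff_eq_empty, Finset.filter_eq_empty_iff] at hempty
    have hsub : R.toFinset ⊆ C.A := fun x hx => hR x (Multiset.mem_toFinset.mp hx)
    have h1 : R.sum = ∑ a ∈ R.toFinset, R.count a * a := by
      rw [Finset.sum_multiset_count R]; simp [smul_eq_mul]
    have h2 : ∑ a ∈ R.toFinset, R.count a * a ≤ ∑ a ∈ C.A, R.count a * a :=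
      Finset.sum_le_sum_of_subset hsub
    have h3 : ∀ a ∈ C.A, R.count a * a ≤ (C.X1 - 1) * C.P := by
      intro a ha
      have hc : R.count a < C.X1 := by
        by_contra hc
        exact hempty ha (by omega)
      have hle : a ≤ C.P := (mem_A_iff.mp ha).2.1
      exact Nat.mul_le_mul (by omega) hle
    have h4 : ∑ a ∈ C.A, R.count a * a ≤ (C.A).card * ((C.X1 - 1) * C.P) := by
      have := Finset.sum_le_card_nsmul C.A (fun a => R.count a * a) ((C.X1 - 1) * C.P) h3
      simpa [smul_eq_mul] using this
    have h5 : (C.A).card * ((C.X1 - 1) * C.P) ≤ C.L * ((C.X1 - 1) * C.P) :=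
      Nat.mul_le_mul hG.A_card (le_refl _)
    have hX1 : 0 < C.X1 := hG.X1_pos
    have hP : 0 < C.P := by unfold P; have := hG.hs; omega
    have hL : 0 < C.L := by have := hG.hL3; omega
    have hbad : C.X1 * (C.L * C.P) ≤ C.L * ((C.X1-1) * C.P) := by omega
    have : C.L * ((C.X1-1) * C.P) < C.X1 * (C.L * C.P) := by
      have e1 : C.L * ((C.X1-1) * C.P) = (C.X1-1) * (C.L * C.P) := by ring
      rw [e1]
      have : 0 < C.L * C.P := Nat.mul_pos hL hP
      exact Nat.mul_lt_mul_of_lt_of_le (by omega) (le_refl _) this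
    omega
  have hmem := Finset.min'_mem _ hne
  unfold heavy
  rw [dif_pos hne]
  have := Finset.mem_filter.mp hmem
  exact ⟨this.1, this.2⟩


section Val

variable {m : ℕ} {R : Multiset ℕ}

lemma Good.chunk_ge (hG : C.Good)
    (hsm : ¬ C.X1 ≤ m * C.s → C.heavy R ∈ C.A ∧ C.X1 ≤ R.count (C.heavy R)) :
    C.X1 ≤ C.chunk m R := by
  unfold chunk
  split_ifs with h
  · exact h
  · have hu := (hsm h).1
    have hu1 : 1 ≤ C.heavy R := le_trans (by omega) (mem_A_iff.mp hu).1
    have : C.X1 * 1 ≤ C.X1 * C.heavy R := Nat.mul_le_mul (le_refl _) hu1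
    omega

lemma Good.T_add (hG : C.Good) (hch : C.X1 ≤ C.chunk m R) :
    C.zz (C.chunk m R) + C.T m R = C.chunk m R ∧ C.T2 ≤ C.T m R := by
  have h1 : C.zz (C.chunk m R) ≤ 2 * C.g * C.P := hG.zz_le _
  have h2 : C.T2 + 2 * C.g * C.P = C.X1 := rfl
  unfold T
  omega

lemma Good.g_dvd_T (hG : C.Good) (hch : C.X1 ≤ C.chunk m R) : C.g ∣ C.T m R := by
  have h1 := hG.zz_mod (C.chunk m R)
  have h2 : C.zz (C.chunk m R) ≤ C.chunk m R := by
    have := (hG.T_add hch).1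
    omega
  exact (Nat.modEq_iff_dvd' h2).mp h1

lemma Good.jdx_lt (hG : C.Good)
    (hsm : ¬ C.X1 ≤ m * C.s → C.heavy R ∈ C.A ∧ C.X1 ≤ R.count (C.heavy R)) :
    C.jdx m R < C.Cap := by
  have hgp := hG.g_pos
  have hL := hG.hL3
  unfold jdx
  split_ifs with h
  · have h1 : C.chunk m R % C.g < C.g := Nat.mod_lt _ hgp
    have h2 : C.g * 1 ≤ C.g * (C.L + 1) := Nat.mul_le_mul (le_refl _) (by omega)
    unfold Cap
    omega
  · have hu := (hsm h).1
    have hmem : C.heavy R ∈ ((C.A).sort (· ≤ ·)) := (Finset.mem_sort _).mpr hu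
    have hidx : ((C.A).sort (· ≤ ·)).idxOf (C.heavy R) < ((C.A).sort (· ≤ ·)).length :=
      List.idxOf_lt_length_iff.mpr hmem
    have hlen : ((C.A).sort (· ≤ ·)).length = (C.A).card := Finset.length_sort _
    have hcard : (C.A).card ≤ C.L := hG.A_card
    set i := ((C.A).sort (· ≤ ·)).idxOf (C.heavy R)
    have hiL : i < C.L := by omega
    have h1 : C.chunk m R % C.g < C.g := Nat.mod_lt _ hgp
    have h2 : C.g + i * C.g + C.chunk m R % C.g < (i + 2) * C.g := by
      have : (i + 2) * C.g = C.g + i * C.g + C.g := by ring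
      omega
    have h3 : (i + 2) * C.g ≤ (C.L + 1) * C.g := Nat.mul_le_mul (by omega) (le_refl _)
    have h4 : (C.L + 1) * C.g = C.Cap := by unfold Cap; ring
    omega

lemma Good.repl_le (hG : C.Good)
    (hsm : ¬ C.X1 ≤ m * C.s → C.heavy R ∈ C.A ∧ C.X1 ≤ R.count (C.heavy R))
    (h : ¬ C.X1 ≤ m * C.s) : Multiset.replicate C.X1 (C.heavy R) ≤ R :=
  Multiset.le_count_iff_replicate_le.mp (hsm h).2

lemma Good.R'_le (hG : C.Good) : C.R' m R ≤ R := by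
  unfold R'
  split_ifs
  · exact le_refl _
  · exact tsub_le_self

lemma Good.R'_sum (hG : C.Good)
    (hsm : ¬ C.X1 ≤ m * C.s → C.heavy R ∈ C.A ∧ C.X1 ≤ R.count (C.heavy R)) :
    (C.R' m R).sum + (C.chunk m R) = R.sum + m * C.s := by
  unfold R' chunk
  split_ifs with h
  · omega
  · have hle := hG.repl_le hsm h
    have h1 : C.R' m R + Multiset.replicate C.X1 (C.heavy R) = R := by
      unfold R'
      rw [if_neg h]
      exact tsub_add_cancel_of_le hle
    have h2 : (C.R' m R).sum + C.X1 * C.heavy R = R.sum := by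
      have := congrArg Multiset.sum h1
      rw [Multiset.sum_add, Multiset.sum_replicate, smul_eq_mul] at this
      exact this
    unfold R' at h2
    rw [if_neg h] at h2
    omega

lemma Good.phi_sum (hG : C.Good)
    (hsm : ¬ C.X1 ≤ m * C.s → C.heavy R ∈ C.A ∧ C.X1 ≤ R.count (C.heavy R)) :
    (C.phi m R).sum = R.sum + m * C.s := by
  have hch := hG.chunk_ge hsm
  have hT := hG.T_add hch
  have hj := hG.jdx_lt hsm
  have hab := hG.ab_eq (hG.g_dvd_T hch) hT.2 hj
  have hz : C.zz (C.chunk m R) = C.zk1 (C.chunk m R) * C.w1 + C.zk2 (C.chunk m R) * C.w2 := rfl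
  have hR' := hG.R'_sum hsm
  unfold phi
  rw [Multiset.sum_add, Multiset.sum_add, Multiset.sum_add, Multiset.sum_add]
  simp only [Multiset.sum_replicate, smul_eq_mul]
  have hab1 : C.av m R * C.v1 + C.bv m R * C.v2 = C.T m R := by
    simp only [Ctx.av, Ctx.bv]
    exact hab.1
  omega

lemma Good.phi_mem (hG : C.Good) (hR : ∀ x ∈ R, x ∈ C.A) :
    ∀ x ∈ C.phi m R, C.s + 1 ≤ x ∧ x ≤ C.L + C.s := by
  intro x hx
  unfold phi at hx
  simp only [Multiset.mem_add] at hx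
  have hIcc : ∀ y, y ∈ Finset.Icc (C.s+1) (C.L+C.s) → C.s+1 ≤ y ∧ y ≤ C.L+C.s := by
    intro y hy; exact Finset.mem_Icc.mp hy
  rcases hx with ((((hx | hx) | hx) | hx) | hx)
  · have : x ∈ R := Multiset.mem_of_le (hG.R'_le) hx
    have := mem_A_iff.mp (hR x this)
    exact ⟨this.1, this.2.1⟩
  · rw [Multiset.eq_of_mem_replicate hx]
    have := mem_A_iff.mp hG.hw1
    exact ⟨this.1, this.2.1⟩
  · rw [Multiset.eq_of_mem_replicate hx]
    have := mem_A_iff.mp hG.hw2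
    exact ⟨this.1, this.2.1⟩
  · rw [Multiset.eq_of_mem_replicate hx]
    exact hIcc _ hG.v1_mem_Icc
  · rw [Multiset.eq_of_mem_replicate hx]
    exact hIcc _ hG.v2_mem_Icc

lemma Good.count_R'_v1 (hG : C.Good) (hR : ∀ x ∈ R, x ∈ C.A) : (C.R' m R).count C.v1 = 0 := by
  rw [Multiset.count_eq_zero]
  intro hmem
  have : C.v1 ∈ R := Multiset.mem_of_le (hG.R'_le) hmem
  exact (mem_A_iff.mp (hR _ this)).2.2 hG.hv1

lemma Good.count_R'_v2 (hG : C.Good) (hR : ∀ x ∈ R, x ∈ C.A) : (C.R' m R).count C.v2 = 0 := by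
  rw [Multiset.count_eq_zero]
  intro hmem
  have : C.v2 ∈ R := Multiset.mem_of_le (hG.R'_le) hmem
  exact (mem_A_iff.mp (hR _ this)).2.2 hG.hv2

lemma Good.phi_count_v1 (hG : C.Good) (hR : ∀ x ∈ R, x ∈ C.A) :
    (C.phi m R).count C.v1 = C.av m R := by
  have hne : C.v2 ≠ C.v1 := fun h => hG.hvne h.symm
  unfold phi
  simp [Multiset.count_replicate, hG.count_R'_v1 hR, hG.w1_ne_v1, hG.w2_ne_v1, hne]

lemma Good.phi_count_v2 (hG : C.Good) (hR : ∀ x ∈ R, x ∈ C.A) :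
    (C.phi m R).count C.v2 = C.bv m R := by
  unfold phi
  simp [Multiset.count_replicate, hG.count_R'_v2 hR, hG.w1_ne_v2, hG.w2_ne_v2, hG.hvne]

lemma Good.P4 (hG : C.Good) : 4 ≤ C.P := by
  have h1 := hG.hs
  have h2 := hG.hL3
  unfold P
  omega

lemma Good.X1_le (hG : C.Good) : C.X1 * (1 + C.L * C.P) ≤ 2 * C.P ^ 7 := by
  have hs1 := hG.hs
  have hL1 := hG.hL3
  have hLP : C.L + 1 ≤ C.P := by unfold P; omega
  have hLP' : C.L ≤ C.P := by unfold P; omega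
  have hv : C.v1 * C.v2 ≤ C.P * C.P := Nat.mul_le_mul hG.v1_le hG.v2_le
  have hgL : C.g * (C.L+1) ≤ C.P * C.P := Nat.mul_le_mul hG.g_le hLP
  have hgP : C.g ≤ C.P := hG.g_le
  have hX : C.X1 ≤ C.P^4 + 3*C.P^2 := by
    have h1 : C.T2 ≤ (C.P * C.P) * ((C.P * C.P) + 1) := by
      unfold T2 Cap
      exact Nat.mul_le_mul hv (by omega)
    have h2 : 2 * C.g * C.P ≤ 2 * (C.P * C.P) := by
      have h := Nat.mul_le_mul hgP (le_refl C.P)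
      calc 2 * C.g * C.P = 2 * (C.g * C.P) := by ring
      _ ≤ 2 * (C.P * C.P) := Nat.mul_le_mul (le_refl 2) h
    unfold X1
    calc C.T2 + 2 * C.g * C.P ≤ (C.P*C.P)*((C.P*C.P)+1) + 2*(C.P*C.P) := Nat.add_le_add h1 h2
    _ = C.P^4 + 3*C.P^2 := by ring
  have hLP2 : 1 + C.L * C.P ≤ 1 + C.P^2 := by
    have := Nat.mul_le_mul hLP' (le_refl C.P)
    have h4 : C.P * C.P = C.P ^ 2 := by ring
    omega
  calc C.X1 * (1 + C.L * C.P) ≤ (C.P^4 + 3*C.P^2) * (1 + C.P^2) :=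
        Nat.mul_le_mul hX hLP2
  _ ≤ 2 * C.P ^ 7 := by
    have hx := hG.P4
    have e : (C.P^4 + 3*C.P^2) * (1 + C.P^2) = C.P^6 + 4*C.P^4 + 3*C.P^2 := by ring
    have h16 : 16 ≤ C.P^2 := by
      calc (16:ℕ) = 4^2 := by norm_num
      _ ≤ C.P^2 := Nat.pow_le_pow_left hx 2
    have h256 : 256 ≤ C.P^4 := by
      calc (256:ℕ) = 4^4 := by norm_num
      _ ≤ C.P^4 := Nat.pow_le_pow_left hx 4
    have h4x : 4*C.P^4 ≤ C.P^6 := by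
      calc 4*C.P^4 ≤ C.P^2 * C.P^4 := Nat.mul_le_mul (by omega) (le_refl _)
      _ = C.P^6 := by ring
    have h3x : 3*C.P^2 ≤ C.P^6 := by
      calc 3*C.P^2 ≤ C.P^4 * C.P^2 := Nat.mul_le_mul (by omega) (le_refl _)
      _ = C.P^6 := by ring
    have hfin : 3*C.P^6 ≤ 2*C.P^7 := by
      calc 3*C.P^6 ≤ (2*C.P)*C.P^6 := Nat.mul_le_mul (by omega) (le_refl _)
      _ = 2*C.P^7 := by ring
    omega

lemma Good.zcongr (hG : C.Good) (c d : ℕ) (h : c % C.g = d % C.g) :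
    C.zk1 c = C.zk1 d ∧ C.zk2 c = C.zk2 d := by
  have hcast : (c : ZMod C.g) = (d : ZMod C.g) := (ZMod.natCast_eq_natCast_iff _ _ _).mpr h
  unfold zk1 zk2
  rw [hcast]
  exact ⟨rfl, rfl⟩

lemma Good.divmod_uniq (hG : C.Good) {i r i' r' : ℕ} (hr : r < C.g) (hr' : r' < C.g)
    (hh : i * C.g + r = i' * C.g + r') : i = i' ∧ r = r' := by
  have e1 : (i * C.g + r) / C.g = i := by
    rw [add_comm (i*C.g) r, Nat.add_mul_div_right _ _ hG.g_pos, Nat.div_eq_of_lt hr, Nat.zero_add]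
  have e1' : (i' * C.g + r') / C.g = i' := by
    rw [add_comm (i'*C.g) r', Nat.add_mul_div_right _ _ hG.g_pos, Nat.div_eq_of_lt hr', Nat.zero_add]
  have e2 : (i * C.g + r) % C.g = r := by
    rw [add_comm (i*C.g) r, Nat.add_mul_mod_self_right, Nat.mod_eq_of_lt hr]
  have e2' : (i' * C.g + r') % C.g = r' := by
    rw [add_comm (i'*C.g) r', Nat.add_mul_mod_self_right, Nat.mod_eq_of_lt hr']
  constructor
  · rw [← e1, hh, e1']
  · rw [← e2, hh, e2']

lemma Good.phi_inj (hG : C.Good) {m n : ℕ} {R S : Multiset ℕ}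
    (hR : ∀ x ∈ R, x ∈ C.A) (hS : ∀ x ∈ S, x ∈ C.A)
    (hsmR : ¬ C.X1 ≤ m * C.s → C.heavy R ∈ C.A ∧ C.X1 ≤ R.count (C.heavy R))
    (hsmS : ¬ C.X1 ≤ n * C.s → C.heavy S ∈ C.A ∧ C.X1 ≤ S.count (C.heavy S))
    (heq : C.phi m R = C.phi n S) : m = n ∧ R = S := by
  have hchR := hG.chunk_ge hsmR
  have hchS := hG.chunk_ge hsmS
  have hTR := hG.T_add hchR
  have hTS := hG.T_add hchS
  have hjR := hG.jdx_lt hsmR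
  have hjS := hG.jdx_lt hsmS
  have habR := hG.ab_eq (hG.g_dvd_T hchR) hTR.2 hjR
  have habS := hG.ab_eq (hG.g_dvd_T hchS) hTS.2 hjS
  have hav : C.av m R = C.av n S := by
    rw [← hG.phi_count_v1 hR, ← hG.phi_count_v1 hS, heq]
  have hbv : C.bv m R = C.bv n S := by
    rw [← hG.phi_count_v2 hR, ← hG.phi_count_v2 hS, heq]
  have hT : C.T m R = C.T n S := by
    have e1 : C.av m R * C.v1 + C.bv m R * C.v2 = C.T m R := by
      simp only [Ctx.av, Ctx.bv]; exact habR.1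
    have e2 : C.av n S * C.v1 + C.bv n S * C.v2 = C.T n S := by
      simp only [Ctx.av, Ctx.bv]; exact habS.1
    rw [← e1, ← e2, hav, hbv]
  have hj : C.jdx m R = C.jdx n S := by
    have e1 : C.av m R / (C.v2/C.g) = C.jdx m R := by
      simp only [Ctx.av]; exact habR.2
    have e2 : C.av n S / (C.v2/C.g) = C.jdx n S := by
      simp only [Ctx.av]; exact habS.2
    rw [← e1, ← e2, hav]
  by_cases h1 : C.X1 ≤ m * C.s <;> by_cases h2 : C.X1 ≤ n * C.s
  · -- both big
    have hj1 : C.jdx m R = C.chunk m R % C.g := by unfold jdx; rw [if_pos h1]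
    have hj2 : C.jdx n S = C.chunk n S % C.g := by unfold jdx; rw [if_pos h2]
    have hrho : C.chunk m R % C.g = C.chunk n S % C.g := by rw [← hj1, ← hj2, hj]
    have hz := hG.zcongr _ _ hrho
    have hzz : C.zz (C.chunk m R) = C.zz (C.chunk n S) := by
      unfold zz; rw [hz.1, hz.2]
    have hchunk : C.chunk m R = C.chunk n S := by
      have u1 := hTR.1
      have u2 := hTS.1
      omega
    have hm : m = n := by
      have e1 : C.chunk m R = m * C.s := by unfold chunk; rw [if_pos h1]
      have e2 : C.chunk n S = n * C.s := by unfold chunk; rw [if_pos h2]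
      have : m * C.s = n * C.s := by rw [← e1, ← e2, hchunk]
      exact Nat.eq_of_mul_eq_mul_right hG.hs this
    refine ⟨hm, ?_⟩
    have hphi := heq
    unfold phi at hphi
    have hRR : C.R' m R = R := by unfold R'; rw [if_pos h1]
    have hSS : C.R' n S = S := by unfold R'; rw [if_pos h2]
    rw [hRR, hSS, hchunk, hav, hbv] at hphi
    exact add_right_cancel (add_right_cancel (add_right_cancel (add_right_cancel hphi)))
  · -- m big, n small : contradiction
    exfalso
    have a1 : C.jdx m R < C.g := by
      unfold jdx; rw [if_pos h1]; exact Nat.mod_lt _ hG.g_pos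
    have a2 : C.g ≤ C.jdx n S := by unfold jdx; rw [if_neg h2]; omega
    omega
  · -- m small, n big : contradiction
    exfalso
    have a1 : C.jdx n S < C.g := by
      unfold jdx; rw [if_pos h2]; exact Nat.mod_lt _ hG.g_pos
    have a2 : C.g ≤ C.jdx m R := by unfold jdx; rw [if_neg h1]; omega
    omega
  · -- both small
    set lst := (C.A).sort (· ≤ ·) with hlst
    set iR := lst.idxOf (C.heavy R) with hiR
    set iS := lst.idxOf (C.heavy S) with hiS
    have hj1 : C.jdx m R = C.g + iR * C.g + C.chunk m R % C.g := by
      unfold jdx; rw [if_neg h1]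
    have hj2 : C.jdx n S = C.g + iS * C.g + C.chunk n S % C.g := by
      unfold jdx; rw [if_neg h2]
    have hr1 : C.chunk m R % C.g < C.g := Nat.mod_lt _ hG.g_pos
    have hr2 : C.chunk n S % C.g < C.g := Nat.mod_lt _ hG.g_pos
    have hkey : iR * C.g + C.chunk m R % C.g = iS * C.g + C.chunk n S % C.g := by omega
    obtain ⟨hi, hrho⟩ := hG.divmod_uniq hr1 hr2 hkey
    -- recover u
    have hmemR : C.heavy R ∈ lst := (Finset.mem_sort _).mpr (hsmR h1).1
    have hmemS : C.heavy S ∈ lst := (Finset.mem_sort _).mpr (hsmS h2).1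
    have hbR : iR < lst.length := List.idxOf_lt_length_iff.mpr hmemR
    have hbS : iS < lst.length := List.idxOf_lt_length_iff.mpr hmemS
    have g1 : lst[iR]'hbR = C.heavy R := List.getElem_idxOf hbR
    have g2 : lst[iS]'hbS = C.heavy S := List.getElem_idxOf hbS
    have hu : C.heavy R = C.heavy S := by
      rw [← g1, ← g2]
      congr 1
    -- chunk equality
    have hz := hG.zcongr _ _ hrho
    have hzz : C.zz (C.chunk m R) = C.zz (C.chunk n S) := by
      unfold zz; rw [hz.1, hz.2]
    have hchunk : C.chunk m R = C.chunk n S := by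
      have u1 := hTR.1
      have u2 := hTS.1
      omega
    have e1 : C.chunk m R = m * C.s + C.X1 * C.heavy R := by unfold chunk; rw [if_neg h1]
    have e2 : C.chunk n S = n * C.s + C.X1 * C.heavy S := by unfold chunk; rw [if_neg h2]
    have hm : m = n := by
      rw [e1, e2, hu] at hchunk
      have : m * C.s = n * C.s := by omega
      exact Nat.eq_of_mul_eq_mul_right hG.hs this
    refine ⟨hm, ?_⟩
    have hphi := heq
    unfold phi at hphi
    have hchz : C.zk1 (C.chunk m R) = C.zk1 (C.chunk n S) ∧
        C.zk2 (C.chunk m R) = C.zk2 (C.chunk n S) := by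
      rw [hchunk]; exact ⟨rfl, rfl⟩
    rw [hchz.1, hchz.2, hav, hbv] at hphi
    have hR'eq : C.R' m R = C.R' n S :=
      add_right_cancel (add_right_cancel (add_right_cancel (add_right_cancel hphi)))
    have hRrec : R = C.R' m R + Multiset.replicate C.X1 (C.heavy R) := by
      have := tsub_add_cancel_of_le (hG.repl_le hsmR h1)
      unfold R'
      rw [if_neg h1]
      exact this.symm
    have hSrec : S = C.R' n S + Multiset.replicate C.X1 (C.heavy S) := by
      have := tsub_add_cancel_of_le (hG.repl_le hsmS h2)
      unfold R'
      rw [if_neg h2]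
      exact this.symm
    rw [hRrec, hSrec, hR'eq, hu]

end Val

end Ctx

lemma two_dvd_cases {a b : ℕ} (h : a ∣ 2) (hodd : ¬ 2 ∣ b) : Nat.Coprime b a := by
  rcases (Nat.dvd_prime Nat.prime_two).mp h with h1 | h2
  · rw [h1]; exact Nat.coprime_one_right _
  · rw [h2]
    exact Nat.Coprime.symm ((Nat.Prime.coprime_iff_not_dvd Nat.prime_two).mpr hodd)

lemma exists_good (s L : ℕ) (V : Finset ℕ) (hs : 0 < s)
    (hVsub : V ⊆ Finset.Icc (s+1) (L+s)) (hVcard : 2 ≤ V.card)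
    (hA : ((Finset.Icc (s+1) (L+s)) \ V).Nonempty) :
    ∃ v1 v2 w1 w2 : ℕ, (Ctx.mk s L v1 v2 w1 w2 V).Good := by
  have hIcc_card : (Finset.Icc (s+1) (L+s)).card = L := by rw [Nat.card_Icc]; omega
  have hL3 : 3 ≤ L := by
    have h1 : ((Finset.Icc (s+1) (L+s)) \ V).card = L - V.card := by
      rw [Finset.card_sdiff_of_subset hVsub, hIcc_card]
    have h2 : 0 < ((Finset.Icc (s+1) (L+s)) \ V).card := Finset.card_pos.mpr hA
    have h3 : V.card ≤ L := hIcc_card ▸ Finset.card_le_card hVsub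
    omega
  have mk : ∀ v1 v2 w1 w2 : ℕ, v1 ∈ V → v2 ∈ V → v1 ≠ v2 →
      w1 ∈ (Finset.Icc (s+1) (L+s)) \ V → w2 ∈ (Finset.Icc (s+1) (L+s)) \ V →
      Nat.Coprime (Nat.gcd w1 w2) (Nat.gcd v1 v2) →
      ∃ v1 v2 w1 w2 : ℕ, (Ctx.mk s L v1 v2 w1 w2 V).Good := by
    intro v1 v2 w1 w2 h1 h2 h3 h4 h5 h6
    exact ⟨v1, v2, w1, w2, ⟨hs, hL3, hVsub, h1, h2, h3, h4, h5, h6⟩⟩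
  have hx1 : s+1 ∈ Finset.Icc (s+1) (L+s) := Finset.mem_Icc.mpr (by omega)
  have hx2 : s+2 ∈ Finset.Icc (s+1) (L+s) := Finset.mem_Icc.mpr (by omega)
  have hx3 : s+3 ∈ Finset.Icc (s+1) (L+s) := Finset.mem_Icc.mpr (by omega)
  have hcons : ∀ n : ℕ, Nat.gcd (n+1) (n+2) = 1 := by
    intro n
    show Nat.gcd (n+1) ((n+1)+1) = 1
    simp
  by_cases p1 : s+1 ∈ V
  · by_cases p2 : s+2 ∈ V
    · obtain ⟨w, hw⟩ := hA
      refine mk (s+1) (s+2) w w p1 p2 (by omega) hw hw ?_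
      rw [hcons s]
      exact Nat.coprime_one_right _
    · by_cases p3 : s+3 ∈ V
      · -- V A V pattern
        have hw : s+2 ∈ (Finset.Icc (s+1) (L+s)) \ V := Finset.mem_sdiff.mpr ⟨hx2, p2⟩
        refine mk (s+1) (s+3) (s+2) (s+2) p1 p3 (by omega) hw hw ?_
        rw [Nat.gcd_self]
        have hdvd : Nat.gcd (s+1) (s+3) ∣ 2 := by
          have := Nat.dvd_sub (Nat.gcd_dvd_right (s+1) (s+3)) (Nat.gcd_dvd_left (s+1) (s+3))
          simpa using this
        rcases (Nat.dvd_prime Nat.prime_two).mp hdvd with h1 | h2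
        · rw [h1]; exact Nat.coprime_one_right _
        · -- gcd = 2 so s+1 even, s+2 odd
          have h2' : 2 ∣ s+1 := h2 ▸ Nat.gcd_dvd_left (s+1) (s+3)
          refine two_dvd_cases hdvd ?_
          omega
      · -- x2, x3 ∈ A
        have hw2' : s+2 ∈ (Finset.Icc (s+1) (L+s)) \ V := Finset.mem_sdiff.mpr ⟨hx2, p2⟩
        have hw3' : s+3 ∈ (Finset.Icc (s+1) (L+s)) \ V := Finset.mem_sdiff.mpr ⟨hx3, p3⟩
        obtain ⟨y, hyV, hyne⟩ := Finset.exists_mem_ne (show 1 < V.card by omega) (s+1)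
        refine mk (s+1) y (s+2) (s+3) p1 hyV (Ne.symm hyne) hw2' hw3' ?_
        rw [hcons (s+1)]
        exact Nat.coprime_one_left _
  · have hw1' : s+1 ∈ (Finset.Icc (s+1) (L+s)) \ V := Finset.mem_sdiff.mpr ⟨hx1, p1⟩
    by_cases p2 : s+2 ∈ V
    · by_cases p3 : s+3 ∈ V
      · obtain ⟨w, hw⟩ := hA
        refine mk (s+2) (s+3) w w p2 p3 (by omega) hw hw ?_
        rw [hcons (s+1)]
        exact Nat.coprime_one_right _
      · -- A V A : w = (s+1, s+3), v = (s+2, y)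
        have hw3' : s+3 ∈ (Finset.Icc (s+1) (L+s)) \ V := Finset.mem_sdiff.mpr ⟨hx3, p3⟩
        obtain ⟨y, hyV, hyne⟩ := Finset.exists_mem_ne (show 1 < V.card by omega) (s+2)
        refine mk (s+2) y (s+1) (s+3) p2 hyV (Ne.symm hyne) hw1' hw3' ?_
        have hdvd : Nat.gcd (s+1) (s+3) ∣ 2 := by
          have := Nat.dvd_sub (Nat.gcd_dvd_right (s+1) (s+3)) (Nat.gcd_dvd_left (s+1) (s+3))
          simpa using this
        rcases (Nat.dvd_prime Nat.prime_two).mp hdvd with h1 | h2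
        · rw [h1]; exact Nat.coprime_one_left _
        · rw [h2]
          have h2' : 2 ∣ s+1 := h2 ▸ Nat.gcd_dvd_left (s+1) (s+3)
          have hodd : ¬ 2 ∣ Nat.gcd (s+2) y := by
            intro hdd
            have : 2 ∣ s+2 := dvd_trans hdd (Nat.gcd_dvd_left _ _)
            omega
          exact (Nat.Prime.coprime_iff_not_dvd Nat.prime_two).mpr hodd
    · -- s+1, s+2 ∈ A
      have hw2' : s+2 ∈ (Finset.Icc (s+1) (L+s)) \ V := Finset.mem_sdiff.mpr ⟨hx2, p2⟩
      obtain ⟨a, ha, b, hb, hab⟩ := Finset.one_lt_card.mp (by omega : 1 < V.card)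
      refine mk a b (s+1) (s+2) ha hb hab hw1' hw2' ?_
      rw [hcons s]
      exact Nat.coprime_one_left _

lemma parts_split (M : Multiset ℕ) (s : ℕ) :
    M.filter (fun x => ¬ x = s) + Multiset.replicate (M.count s) s = M := by
  have h1 := Multiset.filter_add_not (fun x => x = s) M
  rw [Multiset.filter_eq'] at h1
  rw [add_comm]
  exact h1

end IUB
/-- Let `L, s` be positive integers and `V ⊆ {s+1, …, L+s}` have at
least two elements. Then for every `N ≥ 2(L+s)^7 + (L+s)^5`, the number of partitions
of `N` in `I_{L,s,V}` (smallest part equal to `s`, all parts `≤ L + s`, no part in `V`)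
is at most the number of partitions of `N` in `D_{L,s}` (nonempty partitions with all
parts in `{s+1, …, L+s}`). -/
theorem impermissible_set_upper_bound (L s : ℕ) (hL : 0 < L) (hs : 0 < s)
    (V : Finset ℕ) (hV : V ⊆ Finset.Icc (s + 1) (L + s)) (hVcard : 2 ≤ V.card)
    (N : ℕ) (hN : 2 * (L + s) ^ 7 + (L + s) ^ 5 ≤ N) :
    Nat.card {p : N.Partition //
        s ∈ p.parts ∧ (∀ x ∈ p.parts, s ≤ x ∧ x ≤ L + s) ∧ ∀ x ∈ p.parts, x ∉ V} ≤
    Nat.card {p : N.Partition //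
        p.parts ≠ 0 ∧ ∀ x ∈ p.parts, s + 1 ≤ x ∧ x ≤ L + s} := by
  classical
  have hNpos : 0 < N := by
    have h1 : 1 ≤ (L+s)^7 := Nat.one_le_pow _ _ (by omega)
    omega
  have hL2 : 2 ≤ L := by
    have h1 : V.card ≤ (Finset.Icc (s+1) (L+s)).card := Finset.card_le_card hV
    rw [Nat.card_Icc] at h1
    omega
  by_cases hAne : ((Finset.Icc (s+1) (L+s)) \ V).Nonempty
  · -- ===================== main case =====================
    obtain ⟨v1, v2, w1, w2, hG⟩ := IUB.exists_good s L V hs hV hVcard hAne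
    set C : IUB.Ctx := IUB.Ctx.mk s L v1 v2 w1 w2 V with hC
    have hCs : C.s = s := rfl
    have hNb : C.X1 * (1 + C.L * C.P) ≤ N := by
      refine le_trans hG.X1_le ?_
      have hP : C.P = L + s := rfl
      rw [hP]
      omega
    have hsplit : ∀ p : N.Partition,
        p.parts.filter (fun x => ¬ x = s) + Multiset.replicate (p.parts.count s) s = p.parts :=
      fun p => IUB.parts_split p.parts s
    have hsum : ∀ p : N.Partition,
        p.parts.count s * s + (p.parts.filter (fun x => ¬ x = s)).sum = N := by
      intro p
      have h1 := congrArg Multiset.sum (hsplit p)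
      rw [Multiset.sum_add, Multiset.sum_replicate, smul_eq_mul, p.parts_sum] at h1
      omega
    have hRmem : ∀ p : N.Partition, (∀ x ∈ p.parts, s ≤ x ∧ x ≤ L + s) →
        (∀ x ∈ p.parts, x ∉ V) → ∀ x ∈ p.parts.filter (fun x => ¬ x = s), x ∈ C.A := by
      intro p h2 h3 x hx
      rw [Multiset.mem_filter] at hx
      have hb := h2 x hx.1
      have hv3 := h3 x hx.1
      have hxs := hx.2
      exact IUB.Ctx.mem_A_iff.mpr ⟨by omega, hb.2, hv3⟩
    have hsm : ∀ p : N.Partition, (∀ x ∈ p.parts.filter (fun x => ¬ x = s), x ∈ C.A) →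
        (¬ C.X1 ≤ p.parts.count s * C.s →
          C.heavy (p.parts.filter (fun x => ¬ x = s)) ∈ C.A ∧
            C.X1 ≤ (p.parts.filter (fun x => ¬ x = s)).count
              (C.heavy (p.parts.filter (fun x => ¬ x = s)))) := by
      intro p hRA hsmall
      refine hG.heavy_spec hRA ?_
      have h1 := hsum p
      have e : C.X1 * (1 + C.L * C.P) = C.X1 + C.X1 * (C.L * C.P) := by ring
      have e2 : p.parts.count s * C.s = p.parts.count s * s := rfl
      omega
    set f : {p : N.Partition //
        s ∈ p.parts ∧ (∀ x ∈ p.parts, s ≤ x ∧ x ≤ L + s) ∧ ∀ x ∈ p.parts, x ∉ V} →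
        {p : N.Partition // p.parts ≠ 0 ∧ ∀ x ∈ p.parts, s + 1 ≤ x ∧ x ≤ L + s} :=
      fun pp =>
        ⟨⟨C.phi (pp.1.parts.count s) (pp.1.parts.filter (fun x => ¬ x = s)),
          by
            intro x hx
            have hRA := hRmem pp.1 pp.2.2.1 pp.2.2.2
            have := hG.phi_mem hRA x hx
            omega,
          by
            have hRA := hRmem pp.1 pp.2.2.1 pp.2.2.2
            rw [hG.phi_sum (hsm pp.1 hRA)]
            have h1 := hsum pp.1
            have e2 : pp.1.parts.count s * C.s = pp.1.parts.count s * s := rfl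
            omega⟩,
          by
            intro h0
            have h1 : (C.phi (pp.1.parts.count s) (pp.1.parts.filter (fun x => ¬ x = s))).sum = N := by
              have hRA := hRmem pp.1 pp.2.2.1 pp.2.2.2
              rw [hG.phi_sum (hsm pp.1 hRA)]
              have h1 := hsum pp.1
              have e2 : pp.1.parts.count s * C.s = pp.1.parts.count s * s := rfl
              omega
            have h0' : C.phi (pp.1.parts.count s) (pp.1.parts.filter (fun x => ¬ x = s)) = 0 := h0
            rw [h0'] at h1
            simp at h1
            omega,
          by
            intro x hx
            have hRA := hRmem pp.1 pp.2.2.1 pp.2.2.2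
            exact hG.phi_mem hRA x hx⟩ with hf
    apply Nat.card_le_card_of_injective f
    intro p q hpq
    have hparts : C.phi (p.1.parts.count s) (p.1.parts.filter (fun x => ¬ x = s))
        = C.phi (q.1.parts.count s) (q.1.parts.filter (fun x => ¬ x = s)) := by
      have := congrArg (fun x => x.1.parts) hpq
      simpa [hf] using this
    have hRAp := hRmem p.1 p.2.2.1 p.2.2.2
    have hRAq := hRmem q.1 q.2.2.1 q.2.2.2
    obtain ⟨hm, hR⟩ := hG.phi_inj hRAp hRAq (hsm p.1 hRAp) (hsm q.1 hRAq) hparts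
    apply Subtype.ext
    apply Nat.Partition.ext
    rw [← hsplit p.1, ← hsplit q.1, hm, hR]
  · -- ===================== A empty case =====================
    have hIccV : ∀ x, x ∈ Finset.Icc (s+1) (L+s) → x ∈ V := by
      intro x hx
      by_contra hxv
      exact hAne ⟨x, Finset.mem_sdiff.mpr ⟨hx, hxv⟩⟩
    have hsub : Subsingleton {p : N.Partition //
        s ∈ p.parts ∧ (∀ x ∈ p.parts, s ≤ x ∧ x ≤ L + s) ∧ ∀ x ∈ p.parts, x ∉ V} := by
      constructor
      rintro ⟨p, hp1, hp2, hp3⟩ ⟨q, hq1, hq2, hq3⟩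
      have key : ∀ r : N.Partition, (∀ x ∈ r.parts, s ≤ x ∧ x ≤ L + s) →
          (∀ x ∈ r.parts, x ∉ V) →
          r.parts = Multiset.replicate (Multiset.card r.parts) s := by
        intro r h2 h3
        rw [Multiset.eq_replicate]
        refine ⟨rfl, fun b hb => ?_⟩
        have hb2 := h2 b hb
        have hb3 := h3 b hb
        by_contra hbs
        exact hb3 (hIccV b (Finset.mem_Icc.mpr (by omega)))
      have e1 := key p hp2 hp3
      have e2 := key q hq2 hq3
      have c1 : Multiset.card p.parts * s = N := by
        have hh := p.parts_sum
        rw [e1, Multiset.sum_replicate, smul_eq_mul] at hh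
        omega
      have c2 : Multiset.card q.parts * s = N := by
        have hh := q.parts_sum
        rw [e2, Multiset.sum_replicate, smul_eq_mul] at hh
        omega
      have hcard : Multiset.card p.parts = Multiset.card q.parts :=
        Nat.eq_of_mul_eq_mul_right hs (c1.trans c2.symm)
      apply Subtype.ext
      apply Nat.Partition.ext
      rw [e1, e2, hcard]
    have hDne : Nonempty {p : N.Partition //
        p.parts ≠ 0 ∧ ∀ x ∈ p.parts, s + 1 ≤ x ∧ x ≤ L + s} := by
      have hdb := Nat.div_add_mod N (s+1)
      have hblt : N % (s+1) < s+1 := Nat.mod_lt _ (by omega)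
      have hbd : N % (s+1) ≤ N / (s+1) := by
        have hd : s+1 ≤ N / (s+1) := by
          rw [Nat.le_div_iff_mul_le (by omega : 0 < s+1)]
          have h1 : (s+1)*(s+1) ≤ (L+s)*(L+s) := Nat.mul_le_mul (by omega) (by omega)
          have h2 : (L+s)*(L+s) = (L+s)^2 := by ring
          have h3 : (L+s)^2 ≤ (L+s)^7 := Nat.pow_le_pow_right (by omega) (by omega)
          omega
        omega
      obtain ⟨k, hk⟩ := Nat.le.dest hbd
      refine ⟨⟨⟨Multiset.replicate k (s+1) + Multiset.replicate (N % (s+1)) (s+2), ?_, ?_⟩, ?_, ?_⟩⟩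
      · intro x hx
        rw [Multiset.mem_add] at hx
        rcases hx with hx | hx <;> rw [Multiset.eq_of_mem_replicate hx] <;> omega
      · rw [Multiset.sum_add, Multiset.sum_replicate, Multiset.sum_replicate, smul_eq_mul,
          smul_eq_mul]
        have e : k*(s+1) + (N % (s+1))*(s+2) = (s+1)*((N % (s+1)) + k) + (N % (s+1)) := by ring
        rw [e, hk]
        have e2 : (s+1)*(N/(s+1)) = N/(s+1)*(s+1) := by ring
        omega
      · intro h0
        have h1 := congrArg Multiset.card h0
        rw [Multiset.card_add, Multiset.card_replicate, Multiset.card_replicate] at h1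
        simp only [Multiset.card_zero] at h1
        have hk0 : k = 0 := by omega
        have hm0 : N % (s+1) = 0 := by omega
        have e3 : N / (s+1) = 0 := by omega
        rw [e3, hm0, Nat.mul_zero, Nat.add_zero] at hdb
        omega
      · intro x hx
        rw [Multiset.mem_add] at hx
        rcases hx with hx | hx <;> rw [Multiset.eq_of_mem_replicate hx] <;> omega
    haveI := hDne
    calc Nat.card {p : N.Partition //
        s ∈ p.parts ∧ (∀ x ∈ p.parts, s ≤ x ∧ x ≤ L + s) ∧ ∀ x ∈ p.parts, x ∉ V}
        ≤ Nat.card Unit :=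
          Nat.card_le_card_of_injective (fun _ => ())
            (fun a b _ => Subsingleton.elim a b)
    _ = 1 := Nat.card_unique
    _ ≤ Nat.card {p : N.Partition //
        p.parts ≠ 0 ∧ ∀ x ∈ p.parts, s + 1 ≤ x ∧ x ≤ L + s} := Nat.card_pos
end

section
/- Let a, b and n be natural numbers with a, b ≥ 1, and let h be a nonnegative integer. Suppose gcd(a,b) divides n and n ≥ (a-1)(b-1) + a·b·h. Then there exist nonnegative integers x and y with a·x + b·y = n and b·h ≤ x < b·(h+1). -/
/-- Let `a, b, n` be natural numbers with `a, b ≥ 1`, and `h` a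
nonnegative integer. If `gcd(a,b)` divides `n` and `n ≥ (a-1)(b-1) + a·b·h`, then
there exist nonnegative integers `x, y` with `a·x + b·y = n` and `b·h ≤ x < b·(h+1)`. -/
theorem refined_frobenius (a b n h : ℕ) (ha : 0 < a) (hb : 0 < b)
    (hdvd : Nat.gcd a b ∣ n) (hn : (a - 1) * (b - 1) + a * b * h ≤ n) :
    ∃ x y : ℕ, a * x + b * y = n ∧ b * h ≤ x ∧ x < b * (h + 1) := by
  set d := Nat.gcd a b with hd
  have habh : a * b * h ≤ n := le_trans (Nat.le_add_left _ _) hn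
  have hdm : d ∣ n - a * b * h :=
    Nat.dvd_sub hdvd ((Nat.gcd_dvd_left a b).mul_right b |>.mul_right h)
  set m := n - a * b * h with hm
  have hmn : m + a * b * h = n := Nat.sub_add_cancel habh
  have hm1 : (a - 1) * (b - 1) ≤ m := by omega
  obtain ⟨k, hk⟩ := hdm
  have hbez := Nat.gcd_eq_gcd_ab a b
  set Y : ℤ := Nat.gcdA a b * k with hY
  have hmz : (m : ℤ) = a * Y + b * (Nat.gcdB a b * k) := by
    have h1 : (m : ℤ) = (d : ℤ) * k := by exact_mod_cast hk
    rw [h1, hd, hbez]; ring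
  set X : ℤ := Y % (b : ℤ) with hX
  have hbne : (b : ℤ) ≠ 0 := by exact_mod_cast hb.ne'
  have hX0 : 0 ≤ X := Int.emod_nonneg _ hbne
  have hXlt : X < (b : ℤ) := Int.emod_lt_of_pos _ (by exact_mod_cast hb)
  have hdvdb : (b : ℤ) ∣ (m : ℤ) - a * X := by
    have h1 : Y - X = (b : ℤ) * (Y / b) := by
      rw [hX, Int.emod_def]; ring
    have h2 : (m : ℤ) - a * X = (b : ℤ) * (a * (Y / b) + Nat.gcdB a b * k) := by
      rw [hmz]; linear_combination (a : ℤ) * h1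
    exact ⟨_, h2⟩
  obtain ⟨c, hc⟩ := hdvdb
  have hm1z : ((a : ℤ) - 1) * ((b : ℤ) - 1) ≤ (m : ℤ) := by
    have : ((a - 1) * (b - 1) : ℕ) = ((a : ℤ) - 1) * ((b : ℤ) - 1) := by
      push_cast [Nat.cast_sub ha, Nat.cast_sub hb]; ring
    rw [← this]; exact_mod_cast hm1
  have hc0 : 0 ≤ c := by
    by_contra hcn
    push_neg at hcn
    have hc1 : c ≤ -1 := by omega
    have haz : (1 : ℤ) ≤ a := by exact_mod_cast ha
    have hbz : (1 : ℤ) ≤ b := by exact_mod_cast hb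
    nlinarith [mul_le_mul_of_nonneg_left (show X ≤ (b:ℤ) - 1 by omega)
      (show (0:ℤ) ≤ a by omega), mul_le_mul_of_nonneg_left hc1 (show (0:ℤ) ≤ b by omega)]
  refine ⟨b * h + X.toNat, c.toNat, ?_, Nat.le_add_right _ _, ?_⟩
  · have : (↑(a * (b * h + X.toNat) + b * c.toNat) : ℤ) = (n : ℤ) := by
      push_cast [Int.toNat_of_nonneg hX0, Int.toNat_of_nonneg hc0]
      have hn' : (n : ℤ) = m + a * b * h := by exact_mod_cast hmn.symm
      rw [hn']
      linarith [hc]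
    exact_mod_cast this
  · have h1 : X.toNat < b := by omega
    have h2 : b * (h + 1) = b * h + b := by ring
    omega
end

section
/- For every positive integer t and all natural numbers m_1, m_2, ..., m_t, one has m_1^t + m_2^t + ... + m_t^t ≥ (t!/t^t) · ( C(m_1 + m_2 + ... + m_t, t) + C(m_1 + ... + m_{t-1}, t-1) + ... + C(m_1 + m_2, 2) + C(m_1, 1) ), i.e. t^t · (m_1^t + ... + m_t^t) ≥ t! · Σ_{j=1}^{t} C(m_1 + ... + m_j, j). -/
lemma nat_pow_sum_le (s : Finset ℕ) (f : ℕ → ℕ) (n : ℕ) :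
    (∑ i ∈ s, f i) ^ (n + 1) ≤ s.card ^ n * ∑ i ∈ s, f i ^ (n + 1) := by
  have := pow_sum_le_card_mul_sum_pow (s := s) (f := fun i => (f i : ℚ))
    (fun i _ => by positivity) n
  have h : ((∑ i ∈ s, f i : ℕ) : ℚ) ^ (n+1) ≤ ((s.card ^ n * ∑ i ∈ s, f i ^ (n+1) : ℕ) : ℚ) := by
    push_cast
    exact this
  exact_mod_cast h

/-- For every positive integer `t` and all natural numbers
`m_1, …, m_t`, one has
`t^t · (m_1^t + ⋯ + m_t^t) ≥ t! · Σ_{j=1}^{t} C(m_1 + ⋯ + m_j, j)`. -/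
theorem power_sum_ge_binomial_sum (t : ℕ) (ht : 0 < t) (m : ℕ → ℕ) :
    Nat.factorial t *
        ∑ j ∈ Finset.Icc 1 t, Nat.choose (∑ i ∈ Finset.Icc 1 j, m i) j ≤
      t ^ t * ∑ i ∈ Finset.Icc 1 t, (m i) ^ t := by
  set A := ∑ i ∈ Finset.Icc 1 t, (m i) ^ t with hA
  have key : ∀ j ∈ Finset.Icc 1 t,
      Nat.factorial t * Nat.choose (∑ i ∈ Finset.Icc 1 j, m i) j ≤ t ^ (t - 1) * A := by
    intro j hj
    rw [Finset.mem_Icc] at hj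
    obtain ⟨hj1, hjt⟩ := hj
    set S := ∑ i ∈ Finset.Icc 1 j, m i with hS
    -- t! = descFactorial t (t-j) * j!
    have hfac : Nat.factorial t = Nat.descFactorial t (t - j) * Nat.factorial j := by
      have := Nat.choose_mul_factorial_mul_factorial (Nat.sub_le t j)
      rw [Nat.descFactorial_eq_factorial_mul_choose]
      rw [Nat.sub_sub_self hjt] at this
      rw [← this]; ring
    have h1 : Nat.factorial t * Nat.choose S j
        = Nat.descFactorial t (t - j) * Nat.descFactorial S j := by
      rw [hfac, Nat.descFactorial_eq_factorial_mul_choose S j]; ring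
    have h2 : Nat.descFactorial t (t - j) * Nat.descFactorial S j
        ≤ t ^ (t - j) * S ^ j :=
      Nat.mul_le_mul (Nat.descFactorial_le_pow _ _) (Nat.descFactorial_le_pow _ _)
    -- S^j ≤ t^(j-1) * A
    have hsub : Finset.Icc 1 j ⊆ Finset.Icc 1 t := Finset.Icc_subset_Icc_right hjt
    have hSle : S ≤ ∑ i ∈ Finset.Icc 1 t, m i :=
      Finset.sum_le_sum_of_subset hsub
    have h3 : S ^ j ≤ (∑ i ∈ Finset.Icc 1 t, m i) ^ j := Nat.pow_le_pow_left hSle j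
    have h4 : (∑ i ∈ Finset.Icc 1 t, m i) ^ j
        ≤ t ^ (j - 1) * ∑ i ∈ Finset.Icc 1 t, (m i) ^ j := by
      obtain ⟨k, rfl⟩ : ∃ k, j = k + 1 := ⟨j - 1, (Nat.succ_pred_eq_of_pos hj1).symm⟩
      simpa [Nat.card_Icc] using nat_pow_sum_le (Finset.Icc 1 t) m k
    have h5 : ∑ i ∈ Finset.Icc 1 t, (m i) ^ j ≤ A := by
      apply Finset.sum_le_sum
      intro i _
      rcases Nat.eq_zero_or_pos (m i) with h | h
      · simp [h, Nat.zero_pow hj1, Nat.zero_pow ht]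
      · exact Nat.pow_le_pow_right h hjt
    calc Nat.factorial t * Nat.choose S j
        = Nat.descFactorial t (t - j) * Nat.descFactorial S j := h1
      _ ≤ t ^ (t - j) * S ^ j := h2
      _ ≤ t ^ (t - j) * (t ^ (j - 1) * A) := by
          apply Nat.mul_le_mul_left
          calc S ^ j ≤ (∑ i ∈ Finset.Icc 1 t, m i) ^ j := h3
            _ ≤ t ^ (j - 1) * ∑ i ∈ Finset.Icc 1 t, (m i) ^ j := h4
            _ ≤ t ^ (j - 1) * A := Nat.mul_le_mul_left _ h5
      _ = t ^ (t - 1) * A := by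
          rw [← mul_assoc, ← pow_add]
          congr 2
          omega
  calc Nat.factorial t * ∑ j ∈ Finset.Icc 1 t, Nat.choose (∑ i ∈ Finset.Icc 1 j, m i) j
      = ∑ j ∈ Finset.Icc 1 t, Nat.factorial t * Nat.choose (∑ i ∈ Finset.Icc 1 j, m i) j := by
        rw [Finset.mul_sum]
    _ ≤ ∑ j ∈ Finset.Icc 1 t, t ^ (t - 1) * A := Finset.sum_le_sum key
    _ = t * (t ^ (t - 1) * A) := by simp [Finset.sum_const, Nat.card_Icc, mul_assoc]
    _ = t ^ t * A := by
        rw [← mul_assoc, ← pow_succ']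
        congr 2
        omega
end

section
/- Let p be an odd prime and let k_2, k_3 be positive integers not divisible by p. Then for every integer n ≥ (k_2 + k_3)·p^2 there exist nonnegative integers x, y, z with x < p and y < p such that n = k_3·x^2 + k_2·y^2 + p·z. -/
open Polynomial

lemma zmod_sol (p k₂ k₃ n : ℕ) (hp : p.Prime) (hodd : Odd p)
    (h₂ : ¬ p ∣ k₂) (h₃ : ¬ p ∣ k₃) :
    ∃ a b : ZMod p, (k₃ : ZMod p) * a ^ 2 + (k₂ : ZMod p) * b ^ 2 = (n : ZMod p) := by
  haveI : Fact p.Prime := ⟨hp⟩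
  have hk3 : (k₃ : ZMod p) ≠ 0 := by
    simpa [ZMod.natCast_eq_zero_iff] using h₃
  have hk2 : (k₂ : ZMod p) ≠ 0 := by
    simpa [ZMod.natCast_eq_zero_iff] using h₂
  let f : (ZMod p)[X] := C (k₃ : ZMod p) * X ^ 2
  let g : (ZMod p)[X] := C (k₂ : ZMod p) * X ^ 2 - C (n : ZMod p)
  have hf : f.degree = 2 := by
    simpa [f] using degree_C_mul_X_pow 2 hk3
  have hg : g.degree = 2 := by
    have h1 : (C (k₂ : ZMod p) * X ^ 2).degree = 2 := by
      simpa using degree_C_mul_X_pow 2 hk2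
    have h2 : (C (n : ZMod p)).degree < 2 := lt_of_le_of_lt (degree_C_le) (by decide)
    rw [← h1] at h2 ⊢
    exact degree_sub_eq_left_of_degree_lt h2
  have hcard : Fintype.card (ZMod p) % 2 = 1 := by
    rw [ZMod.card]
    exact Nat.odd_iff.mp hodd
  obtain ⟨a, b, hab⟩ := FiniteField.exists_root_sum_quadratic hf hg hcard
  refine ⟨a, b, ?_⟩
  simp only [f, g, eval_add, eval_mul, eval_sub, eval_C, eval_pow, eval_X] at hab
  linear_combination hab

/-- Let `p` be an odd prime and `k₂, k₃` positive integers not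
divisible by `p`. Then for every integer `n ≥ (k₂ + k₃)·p²` there exist nonnegative
integers `x, y, z` with `x < p` and `y < p` such that `n = k₃·x² + k₂·y² + p·z`. -/
theorem representation_two_squares_plus_linear (p k₂ k₃ : ℕ) (hp : p.Prime)
    (hodd : Odd p) (hk₂ : 0 < k₂) (hk₃ : 0 < k₃)
    (h₂ : ¬ p ∣ k₂) (h₃ : ¬ p ∣ k₃) (n : ℕ) (hn : (k₂ + k₃) * p ^ 2 ≤ n) :
    ∃ x y z : ℕ, x < p ∧ y < p ∧ n = k₃ * x ^ 2 + k₂ * y ^ 2 + p * z := by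
  haveI : Fact p.Prime := ⟨hp⟩
  haveI : NeZero p := ⟨hp.ne_zero⟩
  obtain ⟨a, b, hab⟩ := zmod_sol p k₂ k₃ n hp hodd h₂ h₃
  refine ⟨a.val, b.val, (n - (k₃ * a.val ^ 2 + k₂ * b.val ^ 2)) / p,
    a.val_lt, b.val_lt, ?_⟩
  set m := k₃ * a.val ^ 2 + k₂ * b.val ^ 2 with hm
  have hmn : m ≤ n := by
    have ha : a.val ^ 2 ≤ p ^ 2 := Nat.pow_le_pow_left a.val_lt.le 2
    have hb : b.val ^ 2 ≤ p ^ 2 := Nat.pow_le_pow_left b.val_lt.le 2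
    calc m ≤ k₃ * p ^ 2 + k₂ * p ^ 2 := by
          exact Nat.add_le_add (Nat.mul_le_mul_left _ ha) (Nat.mul_le_mul_left _ hb)
      _ = (k₂ + k₃) * p ^ 2 := by ring
      _ ≤ n := hn
  have hdvd : p ∣ n - m := by
    rw [← ZMod.natCast_eq_zero_iff]
    have : ((n - m : ℕ) : ZMod p) = (n : ZMod p) - (m : ZMod p) := by
      push_cast [hmn]; ring
    rw [this, hm]
    push_cast
    rw [ZMod.natCast_val, ZMod.natCast_val, ZMod.cast_id, ZMod.cast_id, ← hab]
    ring
  rw [Nat.mul_div_cancel' hdvd]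
  omega
end

section
/- Let L and s be positive integers and let V ⊆ {s+1, ..., L+s} be a nonempty set with t = |V| satisfying t ≤ (L-2)/2. Then there exists a constant M such that for every integer N ≥ M, the number of partitions of N whose smallest part equals s and all of whose parts are at most L+s is at least the number of pairs (π, σ) with |π| + |σ| = N, where π is a (possibly empty) partition all of whose parts lie in {s+1, ..., L+s} and σ is a (possibly empty) partition all of whose parts lie in V such that for every k ∈ V the multiplicity of k in σ is a perfect t-th power (i.e. of the form m^t for some integer m ≥ 0). -/
namespace TCP
open Multiset

noncomputable section
open Classical


open Multiset

/-- canonical multiset with parts in {s+1, s+2} of sum d (valid for d ≥ (s+1)(s+2)) -/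
def wms (s d : ℕ) : Multiset ℕ :=
  replicate (d/(s+1) - d % (s+1)) (s+1) + replicate (d % (s+1)) (s+2)

lemma wms_mem {s d x : ℕ} (hx : x ∈ wms s d) : x = s+1 ∨ x = s+2 := by
  rcases Multiset.mem_add.1 hx with h | h
  · exact Or.inl (Multiset.eq_of_mem_replicate h)
  · exact Or.inr (Multiset.eq_of_mem_replicate h)

lemma s_notmem_wms {s d : ℕ} : s ∉ wms s d := by
  intro h
  rcases wms_mem h with h | h <;> omega

lemma wms_sum {s d : ℕ} (hd : (s+1)*(s+2) ≤ d) : (wms s d).sum = d := by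
  have hmod := Nat.div_add_mod d (s+1)
  have hblt : d % (s+1) < s+1 := Nat.mod_lt _ (by omega)
  set q := d / (s+1) with hq
  set b := d % (s+1) with hb
  have hqb : s + 2 ≤ q := by
    rw [hq, Nat.le_div_iff_mul_le (by omega : 0 < s+1)]
    calc (s+2)*(s+1) = (s+1)*(s+2) := by ring
    _ ≤ d := hd
  have h1 : (s+1)*(q-b) = (s+1)*q - (s+1)*b := Nat.mul_sub _ _ _
  have h2 : (s+1)*b ≤ (s+1)*q := Nat.mul_le_mul_left _ (by omega)
  have h3 : (s+2)*b = (s+1)*b + b := by ring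
  simp only [wms, Multiset.sum_add, Multiset.sum_replicate, smul_eq_mul, ← hq, ← hb]
  have h4 : (q-b)*(s+1) = (s+1)*(q-b) := Nat.mul_comm _ _
  have h5 : b*(s+2) = (s+2)*b := Nat.mul_comm _ _
  omega

/-- the "i-th positive integer not divisible by s+2" style map -/
def fA (s i : ℕ) : ℕ := i + (i-1)/(s+1)

lemma fA_strictMono (s : ℕ) : StrictMono (fA s) := by
  intro i j hij
  have : (i-1)/(s+1) ≤ (j-1)/(s+1) := Nat.div_le_div_right (by omega)
  unfold fA; omega

lemma fA_pos {s i : ℕ} (hi : 1 ≤ i) : 1 ≤ fA s i :=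
  le_trans hi (Nat.le_add_right _ _)

lemma fA_not_dvd {s i : ℕ} (hi : 1 ≤ i) : ¬ (s+2) ∣ fA s i := by
  rintro ⟨c, hc⟩
  have hmod := Nat.div_add_mod (i-1) (s+1)
  have hblt : (i-1) % (s+1) < s+1 := Nat.mod_lt _ (by omega)
  set a := (i-1)/(s+1) with ha
  set b := (i-1) % (s+1) with hb
  have hfa : fA s i = (s+2)*a + (b+1) := by
    unfold fA
    have : (s+2)*a = (s+1)*a + a := by ring
    omega
  rw [hfa] at hc
  rcases le_or_gt c a with h | h
  · have : (s+2)*c ≤ (s+2)*a := Nat.mul_le_mul_left _ h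
    omega
  · have : (s+2)*(a+1) ≤ (s+2)*c := Nat.mul_le_mul_left _ h
    have h2 : (s+2)*(a+1) = (s+2)*a + (s+2) := by ring
    omega

lemma fA_mul_bound {s i : ℕ} (hi : 1 ≤ i) : (s+1) * fA s i < i * (s+2) := by
  have h1 : (s+1)*((i-1)/(s+1)) ≤ i - 1 := Nat.mul_div_le _ _
  have h2 : (s+1) * fA s i = (s+1)*i + (s+1)*((i-1)/(s+1)) := by unfold fA; ring
  have h3 : i*(s+2) = (s+1)*i + i := by ring
  omega

lemma pow_add_le (y t : ℕ) : (y+1)^(t+1) ≤ y^(t+1) + (t+1)*(y+1)^t := by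
  induction t with
  | zero => simp
  | succ t ih =>
      have h4 : y^(t+1) ≤ (y+1)^(t+1) := Nat.pow_le_pow_left (by omega) _
      calc (y+1)^(t+1+1) = (y+1)^(t+1)*(y+1) := by ring
        _ ≤ (y^(t+1) + (t+1)*(y+1)^t)*(y+1) := Nat.mul_le_mul_right _ ih
        _ = y^(t+1+1) + y^(t+1) + (t+1)*(y+1)^(t+1) := by ring
        _ ≤ y^(t+1+1) + (y+1)^(t+1) + (t+1)*(y+1)^(t+1) := by
              exact Nat.add_le_add_right (Nat.add_le_add_left h4 _) _
        _ = y^(t+1+1) + (t+1+1)*(y+1)^(t+1) := by ring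



def Fc (s : ℕ) : ℕ := (s+1)*(s+2)
def Yb (s t : ℕ) : ℕ := 4*(s*(s+2))*t*2^t + 2*(s+1)*(s+1)*(s+2) + t + 2
def X0 (s t : ℕ) : ℕ := (s+1)*(Yb s t + 1)^t


lemma keyA {s t y i S : ℕ} (hs : 1 ≤ s) (ht : 1 ≤ t) (hy : Yb s t + 1 ≤ y)
    (hi1 : 1 ≤ i) (hi : i ≤ (y+1)^t) (hyS : (s+1)*y^t ≤ S) :
    fA s i * s + Fc s ≤ S := by
  obtain ⟨t', rfl⟩ : ∃ t', t = t'+1 := ⟨t-1, by omega⟩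
  set c := s*(s+2) with hc
  set T := t'+1 with hT
  -- y is big
  set X := c*((t'+1)*2^(t')) with hX
  have hYb : Yb s T = 8*X + 2*(s+1)*(s+1)*(s+2) + T + 2 := by
    rw [Yb, hX, hc, hT]; ring
  have hy8 : 8*X + 2*(s+1)*(s+1)*(s+2) + T + 3 ≤ y := by omega
  have hy1 : 1 ≤ y := by omega
  have h2y : y + 1 ≤ 2*y := by omega
  have step2 : (y+1)^(t') ≤ 2^(t')*y^(t') := by
    calc (y+1)^t' ≤ (2*y)^t' := Nat.pow_le_pow_left h2y _
      _ = 2^t'*y^t' := mul_pow _ _ _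
  have step1 : (y+1)^T ≤ y^T + T*(y+1)^t' := pow_add_le y t'
  have step3 : 2*(c*(T*(y+1)^t')) ≤ y^T := by
    calc 2*(c*(T*(y+1)^t')) ≤ 2*(c*(T*(2^t'*y^t'))) := by
          apply Nat.mul_le_mul_left
          apply Nat.mul_le_mul_left
          exact Nat.mul_le_mul_left _ step2
      _ = (2*X)*y^t' := by rw [hX, hc, hT]; ring
      _ ≤ y*y^t' := Nat.mul_le_mul_right _ (by omega)
      _ = y^T := by rw [hT]; ring
  have hyT : y ≤ y^T := Nat.le_self_pow (by omega) _
  have step5 : 2*(Fc s)*(s+1) ≤ y^T := by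
    have e : 2*(Fc s)*(s+1) = 2*(s+1)*(s+1)*(s+2) := by rw [Fc]; ring
    omega
  -- main chain, everything multiplied by 2*(s+1)
  have hA : (s+1)*fA s i < i*(s+2) := fA_mul_bound hi1
  have c1 : 2*(s+1)*(fA s i * s + Fc s) = 2*s*((s+1)*(fA s i)) + 2*(Fc s)*(s+1) := by ring
  have c2 : 2*s*((s+1)*(fA s i)) ≤ 2*s*(i*(s+2)) := Nat.mul_le_mul_left _ (le_of_lt hA)
  have c3 : 2*s*(i*(s+2)) = 2*(c*i) := by rw [hc]; ring
  have c4 : 2*(c*i) ≤ 2*(c*(y+1)^T) := by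
    apply Nat.mul_le_mul_left
    exact Nat.mul_le_mul_left _ hi
  have c5 : 2*(c*(y+1)^T) ≤ 2*(c*y^T) + 2*(c*(T*(y+1)^t')) := by
    have := Nat.mul_le_mul_left c step1
    have e : c*(y^T + T*(y+1)^t') = c*y^T + c*(T*(y+1)^t') := by ring
    omega
  have c6 : 2*(s+1)*(fA s i * s + Fc s) ≤ 2*(c*y^T) + 2*y^T := by omega
  have c7 : 2*(c*y^T) + 2*y^T = 2*(s+1)*((s+1)*y^T) := by rw [hc]; ring
  have c8 : 2*(s+1)*((s+1)*y^T) ≤ 2*(s+1)*S := Nat.mul_le_mul_left _ hyS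
  have : 2*(s+1)*(fA s i * s + Fc s) ≤ 2*(s+1)*S := by omega
  exact Nat.le_of_mul_le_mul_left this (by omega)


open Multiset Classical


lemma msum_le {u v : Multiset ℕ} (h : u ≤ v) : u.sum ≤ v.sum := by
  obtain ⟨w, rfl⟩ := Multiset.le_iff_exists_add.1 h
  simp

lemma count_mul_le_sum {σ : Multiset ℕ} (k : ℕ) : σ.count k * k ≤ σ.sum := by
  have h : replicate (σ.count k) k ≤ σ :=
    Multiset.le_count_iff_replicate_le.1 le_rfl
  have := msum_le h
  simpa [Multiset.sum_replicate] using this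

def valid (V : Finset ℕ) (t : ℕ) (σ : Multiset ℕ) : Prop :=
  (∀ k ∈ σ, k ∈ V) ∧ ∀ k ∈ V, ∃ m : ℕ, σ.count k = m ^ t

def RS (V : Finset ℕ) (t N : ℕ) : Finset (Multiset ℕ) :=
  ((V.val.bind fun k => replicate N k).powerset.toFinset).filter
    (fun σ => valid V t σ ∧ σ.sum ≤ N)

lemma mem_RS {V : Finset ℕ} {t N : ℕ} (hV1 : ∀ k ∈ V, 1 ≤ k) (σ : Multiset ℕ) :
    σ ∈ RS V t N ↔ valid V t σ ∧ σ.sum ≤ N := by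
  rw [RS, Finset.mem_filter, and_iff_right_iff_imp]
  rintro ⟨⟨hmem, _⟩, hsum⟩
  rw [Multiset.mem_toFinset, Multiset.mem_powerset, Multiset.le_iff_count]
  intro a
  by_cases ha : a ∈ V
  · have h1 : σ.count a ≤ σ.sum := by
      have h2 := count_mul_le_sum (σ := σ) a
      have h3 : 1 ≤ a := hV1 a ha
      nlinarith
    have h4 : N ≤ Multiset.count a (V.val.bind fun k => replicate N k) := by
      rw [Multiset.count_bind]
      have hmap : N ∈ Multiset.map (fun b => Multiset.count a (replicate N b)) V.val := by
        rw [Multiset.mem_map]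
        exact ⟨a, ha, by simp⟩
      exact Multiset.single_le_sum (fun x _ => Nat.zero_le x) _ hmap
    omega
  · have : σ.count a = 0 := Multiset.count_eq_zero_of_notMem (fun hc => ha (hmem a hc))
    omega

def klt (σ' σ : Multiset ℕ) : Prop :=
  σ'.sum < σ.sum ∨ (σ'.sum = σ.sum ∧ Encodable.encode σ' < Encodable.encode σ)

lemma klt_trans {a b c : Multiset ℕ} (h1 : klt a b) (h2 : klt b c) : klt a c := by
  rcases h1 with h1 | ⟨h1, h1'⟩ <;> rcases h2 with h2 | ⟨h2, h2'⟩ <;>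
    [left; left; left; right] <;> omega

lemma klt_irrefl (a : Multiset ℕ) : ¬ klt a a := by
  rintro (h | ⟨_, h⟩) <;> omega

lemma klt_total {a b : Multiset ℕ} (hne : a ≠ b) : klt a b ∨ klt b a := by
  rcases Nat.lt_trichotomy a.sum b.sum with h | h | h
  · exact Or.inl (Or.inl h)
  · rcases Nat.lt_trichotomy (Encodable.encode a) (Encodable.encode b) with h' | h' | h'
    · exact Or.inl (Or.inr ⟨h, h'⟩)
    · exact absurd (Encodable.encode_injective h') hne
    · exact Or.inr (Or.inr ⟨h.symm, h'⟩)
  · exact Or.inr (Or.inl h)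

def rk (V : Finset ℕ) (t N : ℕ) (σ : Multiset ℕ) : ℕ :=
  ((RS V t N).filter (fun σ' => klt σ' σ)).card

lemma rk_lt_rk {V : Finset ℕ} {t N : ℕ} {σ₁ σ₂ : Multiset ℕ}
    (h1 : σ₁ ∈ RS V t N) (h : klt σ₁ σ₂) : rk V t N σ₁ < rk V t N σ₂ := by
  have hsub : insert σ₁ ((RS V t N).filter (fun σ' => klt σ' σ₁)) ⊆
      (RS V t N).filter (fun σ' => klt σ' σ₂) := by
    intro x hx
    rcases Finset.mem_insert.1 hx with rfl | hx
    · exact Finset.mem_filter.2 ⟨h1, h⟩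
    · rcases Finset.mem_filter.1 hx with ⟨hx1, hx2⟩
      exact Finset.mem_filter.2 ⟨hx1, klt_trans hx2 h⟩
  have hnot : σ₁ ∉ (RS V t N).filter (fun σ' => klt σ' σ₁) := by
    intro hx
    exact klt_irrefl σ₁ (Finset.mem_filter.1 hx).2
  calc rk V t N σ₁ < rk V t N σ₁ + 1 := Nat.lt_succ_self _
    _ = (insert σ₁ ((RS V t N).filter (fun σ' => klt σ' σ₁))).card :=
        (Finset.card_insert_of_notMem hnot).symm
    _ ≤ _ := Finset.card_le_card hsub

lemma rk_inj {V : Finset ℕ} {t N : ℕ} {σ₁ σ₂ : Multiset ℕ}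
    (h1 : σ₁ ∈ RS V t N) (h2 : σ₂ ∈ RS V t N) (h : rk V t N σ₁ = rk V t N σ₂) :
    σ₁ = σ₂ := by
  by_contra hne
  rcases klt_total hne with hk | hk
  · exact absurd h (Nat.ne_of_lt (rk_lt_rk h1 hk))
  · exact absurd h.symm (Nat.ne_of_lt (rk_lt_rk h2 hk))

lemma rk_succ_le {V : Finset ℕ} {t N : ℕ} {σ : Multiset ℕ} (h : σ ∈ RS V t N) {S : ℕ}
    (hS : σ.sum ≤ S) :
    rk V t N σ + 1 ≤ ((RS V t N).filter (fun σ' => σ'.sum ≤ S)).card := by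
  have hsub : insert σ ((RS V t N).filter (fun σ' => klt σ' σ)) ⊆
      (RS V t N).filter (fun σ' => σ'.sum ≤ S) := by
    intro x hx
    rcases Finset.mem_insert.1 hx with rfl | hx
    · exact Finset.mem_filter.2 ⟨h, hS⟩
    · rcases Finset.mem_filter.1 hx with ⟨hx1, hx2⟩
      refine Finset.mem_filter.2 ⟨hx1, ?_⟩
      rcases hx2 with h' | ⟨h', _⟩ <;> omega
  have hnot : σ ∉ (RS V t N).filter (fun σ' => klt σ' σ) := by
    intro hx
    exact klt_irrefl σ (Finset.mem_filter.1 hx).2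
  calc rk V t N σ + 1 = (insert σ ((RS V t N).filter (fun σ' => klt σ' σ))).card :=
        (Finset.card_insert_of_notMem hnot).symm
    _ ≤ _ := Finset.card_le_card hsub

/-- counting bound: σ's with sum ≤ S, S < (s+1)(y+1)^t, are at most (y+1)^t many -/
lemma card_small_le {V : Finset ℕ} {s t N S y : ℕ} (hV1 : ∀ k ∈ V, s+1 ≤ k)
    (htV : t = V.card) (ht : 1 ≤ t) (hS : S < (s+1)*(y+1)^t) :
    ((RS V t N).filter (fun σ' => σ'.sum ≤ S)).card ≤ (y+1)^t := by
  classical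
  have hcard : ((Finset.univ : Finset (↥V → Fin (y+1)))).card = (y+1)^t := by
    rw [Finset.card_univ, Fintype.card_fun, Fintype.card_fin, Fintype.card_coe, htV]
  rw [← hcard]
  apply Finset.card_le_card_of_injOn
    (fun σ' => fun k : ↥V =>
      (⟨min (if h : ∃ m : ℕ, σ'.count ↑k = m ^ t then Nat.find h else 0) y,
        Nat.lt_succ_of_le (min_le_right _ _)⟩ : Fin (y+1)))
  · intro _ _; exact Finset.mem_univ _
  · intro σa ha σb hb hfab
    rcases Finset.mem_filter.1 ha with ⟨ha1, ha2⟩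
    rcases Finset.mem_filter.1 hb with ⟨hb1, hb2⟩
    have hVa : ∀ k ∈ V, 1 ≤ k := fun k hk => le_trans (by omega) (hV1 k hk)
    rcases (mem_RS hVa σa).1 ha1 with ⟨⟨hamem, hapow⟩, _⟩
    rcases (mem_RS hVa σb).1 hb1 with ⟨⟨hbmem, hbpow⟩, _⟩
    have key : ∀ (σ' : Multiset ℕ), (∀ k ∈ σ', k ∈ V) → (∀ k ∈ V, ∃ m : ℕ, σ'.count k = m ^ t) →
        σ'.sum ≤ S → ∀ k ∈ V, ∀ (h : ∃ m : ℕ, σ'.count k = m ^ t), Nat.find h ≤ y := by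
      intro σ' hmem hpow hsum k hk h
      by_contra hmy
      push_neg at hmy
      have hspec : σ'.count k = (Nat.find h) ^ t := Nat.find_spec h
      have h1 : (s+1) * (y+1)^t ≤ (s+1) * (Nat.find h)^t :=
        Nat.mul_le_mul_left _ (Nat.pow_le_pow_left (by omega) t)
      have h2 : (s+1) * (Nat.find h)^t ≤ k * (Nat.find h)^t :=
        Nat.mul_le_mul_right _ (hV1 k hk)
      have h3 : σ'.count k * k ≤ σ'.sum := count_mul_le_sum k
      have h4 : (Nat.find h)^t * k = k * (Nat.find h)^t := Nat.mul_comm _ _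
      rw [hspec] at h3
      omega
    apply Multiset.ext.2
    intro a
    by_cases haV : a ∈ V
    · have hfa := congrFun hfab ⟨a, haV⟩
      simp only [Fin.mk.injEq] at hfa
      rw [dif_pos (hapow a haV), dif_pos (hbpow a haV)] at hfa
      have hya := key σa hamem hapow ha2 a haV (hapow a haV)
      have hyb := key σb hbmem hbpow hb2 a haV (hbpow a haV)
      rw [min_eq_left hya, min_eq_left hyb] at hfa
      have e1 := Nat.find_spec (hapow a haV)
      have e2 := Nat.find_spec (hbpow a haV)
      rw [e1, e2, hfa]
    · rw [Multiset.count_eq_zero_of_notMem (fun hc => haV (hamem a hc)),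
        Multiset.count_eq_zero_of_notMem (fun hc => haV (hbmem a hc))]


def Kb (s t : ℕ) : ℕ := (Yb s t + 1)^t
def rBc (s t L : ℕ) : ℕ := (s+2)*(Kb s t * L)
def Wc (s t L : ℕ) : ℕ := rBc s t L * s + Fc s + 1
def Mc (s t L : ℕ) : ℕ := X0 s t + (L+s)*(L*(Wc s t L)) + (L+s) + 1

def vsel (s t L : ℕ) (π : Multiset ℕ) : ℕ :=
  if h : ∃ v, Wc s t L ≤ π.count v then Nat.find h else 0

def rOf (s t L N : ℕ) (V : Finset ℕ) (x : Multiset ℕ × Multiset ℕ) : ℕ :=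
  if x.2.sum < X0 s t then (s+2)*((rk V t N x.2)*L + (vsel s t L x.1 - s))
  else fA s (rk V t N x.2 + 1)

def jOf (s t L N : ℕ) (V : Finset ℕ) (x : Multiset ℕ × Multiset ℕ) : ℕ :=
  ((rOf s t L N V x) * s + Fc s)/(vsel s t L x.1) + 1

def phi (s t L N : ℕ) (V : Finset ℕ) (x : Multiset ℕ × Multiset ℕ) : Multiset ℕ :=
  if x.2.sum < X0 s t then
    (x.1 - replicate (jOf s t L N V x) (vsel s t L x.1)) + replicate (rOf s t L N V x) s
      + wms s (x.2.sum + (jOf s t L N V x)*(vsel s t L x.1) - (rOf s t L N V x)*s)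
  else
    x.1 + replicate (rOf s t L N V x) s + wms s (x.2.sum - (rOf s t L N V x)*s)

lemma code_inj {Lp a₁ b₁ a₂ b₂ : ℕ} (hb1 : 1 ≤ b₁) (hb2 : b₁ ≤ Lp) (hb3 : 1 ≤ b₂)
    (hb4 : b₂ ≤ Lp) (h : a₁*Lp + b₁ = a₂*Lp + b₂) : a₁ = a₂ ∧ b₁ = b₂ := by
  rcases Nat.lt_trichotomy a₁ a₂ with hlt | heq | hlt
  · exfalso
    have h1 : (a₁+1)*Lp ≤ a₂*Lp := Nat.mul_le_mul_right _ hlt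
    have h2 : (a₁+1)*Lp = a₁*Lp + Lp := by ring
    omega
  · subst heq; omega
  · exfalso
    have h1 : (a₂+1)*Lp ≤ a₁*Lp := Nat.mul_le_mul_right _ hlt
    have h2 : (a₂+1)*Lp = a₂*Lp + Lp := by ring
    omega

lemma exists_frequent {s t L N : ℕ} {π σ : Multiset ℕ}
    (hπ : ∀ k ∈ π, k ∈ Finset.Icc (s+1) (L+s))
    (hsum : π.sum + σ.sum = N) (hN : Mc s t L ≤ N) (hS : σ.sum < X0 s t) :
    ∃ v, Wc s t L ≤ π.count v := by
  by_contra hcon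
  push_neg at hcon
  have hsub : π.toFinset ⊆ Finset.Icc (s+1) (L+s) := by
    intro v hv
    exact hπ v (Multiset.mem_toFinset.1 hv)
  have hcard : (Multiset.card π : ℕ) = ∑ v ∈ π.toFinset, π.count v :=
    (Multiset.toFinset_sum_count_eq π).symm
  have h1 : ∑ v ∈ π.toFinset, π.count v ≤ ∑ v ∈ Finset.Icc (s+1) (L+s), π.count v :=
    Finset.sum_le_sum_of_subset hsub
  have h2 : ∑ v ∈ Finset.Icc (s+1) (L+s), π.count v
      ≤ ∑ _v ∈ Finset.Icc (s+1) (L+s), (Wc s t L - 1) :=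
    Finset.sum_le_sum (fun v _ => by have := hcon v; omega)
  have h3 : ∑ _v ∈ Finset.Icc (s+1) (L+s), (Wc s t L - 1) = L * (Wc s t L - 1) := by
    rw [Finset.sum_const, smul_eq_mul, Nat.card_Icc]
    congr 1
    omega
  have h4 : π.sum ≤ Multiset.card π * (L+s) := by
    have := Multiset.sum_le_card_nsmul π (L+s)
      (fun x hx => (Finset.mem_Icc.1 (hπ x hx)).2)
    simpa [smul_eq_mul] using this
  have h5 : Multiset.card π * (L+s) ≤ (L * (Wc s t L - 1)) * (L+s) :=
    Nat.mul_le_mul_right _ (by omega)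
  have hWpos : 1 ≤ Wc s t L := by rw [Wc]; omega
  have h6 : (L * (Wc s t L - 1)) * (L+s) + L*(L+s) = (L+s)*(L*(Wc s t L)) := by
    obtain ⟨w', hw'⟩ : ∃ w', Wc s t L = w' + 1 := ⟨Wc s t L - 1, by omega⟩
    rw [hw']
    simp only [Nat.add_sub_cancel]
    ring
  have hMc : Mc s t L = X0 s t + (L+s)*(L*(Wc s t L)) + (L+s) + 1 := rfl
  omega

lemma phi_spec {s t L N : ℕ} {V : Finset ℕ}
    (hL : 4 ≤ L) (hs : 1 ≤ s) (hV : V ⊆ Finset.Icc (s+1) (L+s))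
    (htV : t = V.card) (ht : 1 ≤ t) (hN : Mc s t L ≤ N)
    (π σ : Multiset ℕ)
    (hπ : ∀ k ∈ π, k ∈ Finset.Icc (s+1) (L+s))
    (hσ : ∀ k ∈ σ, k ∈ V)
    (hpow : ∀ k ∈ V, ∃ m : ℕ, σ.count k = m ^ t)
    (hsum : π.sum + σ.sum = N) :
    ∃ core d,
      phi s t L N V (π, σ) = core + replicate (rOf s t L N V (π, σ)) s + wms s d
      ∧ Fc s ≤ d
      ∧ (∀ k ∈ core, k ∈ Finset.Icc (s+1) (L+s))
      ∧ core.sum + (rOf s t L N V (π, σ))*s + d = N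
      ∧ 1 ≤ rOf s t L N V (π, σ)
      ∧ (if σ.sum < X0 s t then
            rOf s t L N V (π, σ) = (s+2)*((rk V t N σ)*L + (vsel s t L π - s))
            ∧ s+1 ≤ vsel s t L π ∧ vsel s t L π ≤ L+s
            ∧ replicate (jOf s t L N V (π, σ)) (vsel s t L π) ≤ π
            ∧ core = π - replicate (jOf s t L N V (π, σ)) (vsel s t L π)
            ∧ d = σ.sum + (jOf s t L N V (π, σ))*(vsel s t L π)
                  - (rOf s t L N V (π, σ))*s
          else
            rOf s t L N V (π, σ) = fA s (rk V t N σ + 1) ∧ core = π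
            ∧ d = σ.sum - (rOf s t L N V (π, σ))*s) := by
  have hV1 : ∀ k ∈ V, 1 ≤ k := by
    intro k hk
    have := (Finset.mem_Icc.1 (hV hk)).1
    omega
  have hVs : ∀ k ∈ V, s+1 ≤ k := fun k hk => (Finset.mem_Icc.1 (hV hk)).1
  have hσRS : σ ∈ RS V t N := (mem_RS hV1 σ).2 ⟨⟨hσ, hpow⟩, by omega⟩
  by_cases hc : σ.sum < X0 s t
  · -- case B
    have hex : ∃ v, Wc s t L ≤ π.count v := exists_frequent hπ hsum hN hc
    have hvdef : vsel s t L π = Nat.find hex := by simp only [vsel]; rw [dif_pos hex]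
    have hvcount : Wc s t L ≤ π.count (vsel s t L π) := by
      rw [hvdef]; exact Nat.find_spec hex
    have hWpos : 1 ≤ Wc s t L := by rw [Wc]; omega
    have hvmem : vsel s t L π ∈ π := by
      rw [← Multiset.count_pos]; omega
    have hvIcc := Finset.mem_Icc.1 (hπ _ hvmem)
    have hrk : rk V t N σ + 1 ≤ Kb s t := by
      have h1 := rk_succ_le hσRS (le_refl σ.sum)
      have h2 : ((RS V t N).filter (fun σ' => σ'.sum ≤ σ.sum)).card ≤ (Yb s t + 1)^t :=
        card_small_le hVs htV ht (by rw [X0] at hc; omega)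
      rw [Kb]
      omega
    have hr : rOf s t L N V (π, σ) = (s+2)*((rk V t N σ)*L + (vsel s t L π - s)) := by
      simp only [rOf]; rw [if_pos hc]
    have hvs1 : 1 ≤ vsel s t L π - s := by omega
    have hr1 : 1 ≤ rOf s t L N V (π, σ) := by
      rw [hr]
      have h1 : 1 ≤ (rk V t N σ)*L + (vsel s t L π - s) := by omega
      nlinarith
    have hKb1 : 1 ≤ Kb s t := by
      rw [Kb]; exact Nat.one_le_pow _ _ (by omega)
    have hrB : rOf s t L N V (π, σ) ≤ rBc s t L := by
      rw [hr, rBc]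
      apply Nat.mul_le_mul_left
      have h1 : (rk V t N σ)*L ≤ (Kb s t - 1)*L :=
        Nat.mul_le_mul_right _ (by omega)
      have h2 : vsel s t L π - s ≤ L := by omega
      have h3 : (Kb s t - 1)*L + L = Kb s t * L := by
        obtain ⟨k', hk'⟩ : ∃ k', Kb s t = k' + 1 := ⟨Kb s t - 1, by omega⟩
        rw [hk']
        simp only [Nat.add_sub_cancel]
        ring
      omega
    have hj : jOf s t L N V (π, σ)
        = ((rOf s t L N V (π, σ))*s + Fc s)/(vsel s t L π) + 1 := by
      simp only [jOf]
    have hjW : jOf s t L N V (π, σ) ≤ Wc s t L := by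
      have h1 : ((rOf s t L N V (π, σ))*s + Fc s)/(vsel s t L π)
          ≤ (rOf s t L N V (π, σ))*s + Fc s := Nat.div_le_self _ _
      have h2 : (rOf s t L N V (π, σ))*s ≤ rBc s t L * s :=
        Nat.mul_le_mul_right _ hrB
      rw [hj, Wc]
      omega
    have hjc : jOf s t L N V (π, σ) ≤ π.count (vsel s t L π) := by omega
    have hrepl : replicate (jOf s t L N V (π, σ)) (vsel s t L π) ≤ π :=
      Multiset.le_count_iff_replicate_le.1 hjc
    have hjv : (rOf s t L N V (π, σ))*s + Fc s
        < (jOf s t L N V (π, σ))*(vsel s t L π) := by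
      have hdm := Nat.div_add_mod ((rOf s t L N V (π, σ))*s + Fc s) (vsel s t L π)
      have hmlt : ((rOf s t L N V (π, σ))*s + Fc s) % (vsel s t L π) < vsel s t L π :=
        Nat.mod_lt _ (by omega)
      have he : (jOf s t L N V (π, σ))*(vsel s t L π)
          = (((rOf s t L N V (π, σ))*s + Fc s)/(vsel s t L π))*(vsel s t L π)
            + vsel s t L π := by rw [hj]; ring
      have hcm : (vsel s t L π) * (((rOf s t L N V (π, σ))*s + Fc s)/(vsel s t L π))
          = (((rOf s t L N V (π, σ))*s + Fc s)/(vsel s t L π))*(vsel s t L π) :=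
        Nat.mul_comm _ _
      omega
    have hcoreπ : (π - replicate (jOf s t L N V (π, σ)) (vsel s t L π))
        + replicate (jOf s t L N V (π, σ)) (vsel s t L π) = π :=
      tsub_add_cancel_of_le hrepl
    have hcoresum : (π - replicate (jOf s t L N V (π, σ)) (vsel s t L π)).sum
        + (jOf s t L N V (π, σ))*(vsel s t L π) = π.sum := by
      have := congrArg Multiset.sum hcoreπ
      rwa [Multiset.sum_add, Multiset.sum_replicate, smul_eq_mul] at this
    refine ⟨π - replicate (jOf s t L N V (π, σ)) (vsel s t L π),
      σ.sum + (jOf s t L N V (π, σ))*(vsel s t L π) - (rOf s t L N V (π, σ))*s,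
      ?_, by omega, ?_, by omega, hr1, ?_⟩
    · simp only [phi]
      rw [if_pos hc]
    · intro k hk
      exact hπ k (Multiset.mem_of_le (tsub_le_self) hk)
    · rw [if_pos hc]
      exact ⟨hr, by omega, by omega, hrepl, rfl, rfl⟩
  · -- case A
    push_neg at hc
    have hex : ∃ y, σ.sum < (s+1)*(y+1)^t := by
      refine ⟨σ.sum, ?_⟩
      have h1 : σ.sum + 1 ≤ (σ.sum+1)^t := Nat.le_self_pow (by omega) _
      have h2 : (σ.sum+1)^t ≤ (s+1)*(σ.sum+1)^t := Nat.le_mul_of_pos_left _ (by omega)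
      omega
    have hyspec : σ.sum < (s+1)*(Nat.find hex + 1)^t := Nat.find_spec hex
    have hyY : Yb s t + 1 ≤ Nat.find hex := by
      have h1 : Yb s t < Nat.find hex := by
        rw [Nat.lt_find_iff]
        intro m hm
        push_neg
        calc (s+1)*(m+1)^t ≤ (s+1)*(Yb s t+1)^t :=
              Nat.mul_le_mul_left _ (Nat.pow_le_pow_left (by omega) _)
          _ = X0 s t := by rw [X0]
          _ ≤ σ.sum := hc
      omega
    have hylow : (s+1)*(Nat.find hex)^t ≤ σ.sum := by
      have h1 := Nat.find_min hex (m := Nat.find hex - 1) (by omega)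
      push_neg at h1
      have h2 : Nat.find hex - 1 + 1 = Nat.find hex := by omega
      rwa [h2] at h1
    have hi : rk V t N σ + 1 ≤ (Nat.find hex + 1)^t := by
      have h1 := rk_succ_le hσRS (le_refl σ.sum)
      have h2 := card_small_le (N := N) hVs htV ht hyspec
      omega
    have hkey : fA s (rk V t N σ + 1) * s + Fc s ≤ σ.sum :=
      keyA hs ht hyY (by omega) hi hylow
    have hr : rOf s t L N V (π, σ) = fA s (rk V t N σ + 1) := by
      simp only [rOf]; rw [if_neg (by omega)]
    have hkey' : (rOf s t L N V (π, σ))*s + Fc s ≤ σ.sum := by rw [hr]; exact hkey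
    refine ⟨π, σ.sum - (rOf s t L N V (π, σ))*s, ?_, by omega, hπ, by omega, ?_, ?_⟩
    · simp only [phi]
      rw [if_neg (by omega)]
    · rw [hr]
      exact fA_pos (by omega)
    · rw [if_neg (by omega)]
      exact ⟨hr, rfl, rfl⟩

lemma phi_inj {s t L N : ℕ} {V : Finset ℕ}
    (hL : 4 ≤ L) (hs : 1 ≤ s) (hV : V ⊆ Finset.Icc (s+1) (L+s))
    (htV : t = V.card) (ht : 1 ≤ t) (hN : Mc s t L ≤ N)
    {π₁ σ₁ π₂ σ₂ : Multiset ℕ}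
    (hπ₁ : ∀ k ∈ π₁, k ∈ Finset.Icc (s+1) (L+s))
    (hσ₁ : ∀ k ∈ σ₁, k ∈ V)
    (hpow₁ : ∀ k ∈ V, ∃ m : ℕ, σ₁.count k = m ^ t)
    (hsum₁ : π₁.sum + σ₁.sum = N)
    (hπ₂ : ∀ k ∈ π₂, k ∈ Finset.Icc (s+1) (L+s))
    (hσ₂ : ∀ k ∈ σ₂, k ∈ V)
    (hpow₂ : ∀ k ∈ V, ∃ m : ℕ, σ₂.count k = m ^ t)
    (hsum₂ : π₂.sum + σ₂.sum = N)
    (heq : phi s t L N V (π₁, σ₁) = phi s t L N V (π₂, σ₂)) :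
    π₁ = π₂ ∧ σ₁ = σ₂ := by
  have hV1 : ∀ k ∈ V, 1 ≤ k := by
    intro k hk
    have := (Finset.mem_Icc.1 (hV hk)).1
    omega
  have hσRS₁ : σ₁ ∈ RS V t N := (mem_RS hV1 σ₁).2 ⟨⟨hσ₁, hpow₁⟩, by omega⟩
  have hσRS₂ : σ₂ ∈ RS V t N := (mem_RS hV1 σ₂).2 ⟨⟨hσ₂, hpow₂⟩, by omega⟩
  obtain ⟨core₁, d₁, hphi₁, hd₁, hcoreI₁, hsumN₁, hrpos₁, hcase₁⟩ :=
    phi_spec hL hs hV htV ht hN π₁ σ₁ hπ₁ hσ₁ hpow₁ hsum₁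
  obtain ⟨core₂, d₂, hphi₂, hd₂, hcoreI₂, hsumN₂, hrpos₂, hcase₂⟩ :=
    phi_spec hL hs hV htV ht hN π₂ σ₂ hπ₂ hσ₂ hpow₂ hsum₂
  have hcnt : ∀ (core : Multiset ℕ) d r, (∀ k ∈ core, k ∈ Finset.Icc (s+1) (L+s)) →
      Multiset.count s (core + replicate r s + wms s d) = r := by
    intro core d r hcore
    rw [Multiset.count_add, Multiset.count_add, Multiset.count_replicate_self]
    have h1 : Multiset.count s core = 0 :=
      Multiset.count_eq_zero_of_notMem
        (fun h => by have := (Finset.mem_Icc.1 (hcore s h)).1; omega)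
    have h2 : Multiset.count s (wms s d) = 0 :=
      Multiset.count_eq_zero_of_notMem s_notmem_wms
    omega
  have hrr : rOf s t L N V (π₁, σ₁) = rOf s t L N V (π₂, σ₂) := by
    have h := congrArg (Multiset.count s) heq
    rwa [hphi₁, hphi₂, hcnt _ _ _ hcoreI₁, hcnt _ _ _ hcoreI₂] at h
  by_cases hc₁ : σ₁.sum < X0 s t <;> by_cases hc₂ : σ₂.sum < X0 s t
  · -- both case B
    rw [if_pos hc₁] at hcase₁
    rw [if_pos hc₂] at hcase₂
    obtain ⟨hr₁, hv₁a, hv₁b, hrepl₁, hcore₁e, hd₁e⟩ := hcase₁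
    obtain ⟨hr₂, hv₂a, hv₂b, hrepl₂, hcore₂e, hd₂e⟩ := hcase₂
    have hcode : (rk V t N σ₁)*L + (vsel s t L π₁ - s)
        = (rk V t N σ₂)*L + (vsel s t L π₂ - s) := by
      apply Nat.eq_of_mul_eq_mul_left (show 0 < s+2 by omega)
      rw [← hr₁, ← hr₂, hrr]
    obtain ⟨hrkeq, hvseq⟩ := code_inj (by omega) (by omega) (by omega) (by omega) hcode
    have hveq : vsel s t L π₁ = vsel s t L π₂ := by omega
    have hσeq : σ₁ = σ₂ := rk_inj hσRS₁ hσRS₂ hrkeq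
    have hjeq : jOf s t L N V (π₁, σ₁) = jOf s t L N V (π₂, σ₂) := by
      simp only [jOf]
      rw [hrr, hveq]
    have hdeq : d₁ = d₂ := by rw [hd₁e, hd₂e, hjeq, hveq, hrr, hσeq]
    have hcoreeq : core₁ = core₂ := by
      have h := heq
      rw [hphi₁, hphi₂, hrr, hdeq] at h
      exact add_right_cancel (add_right_cancel h)
    have hπeq : π₁ = π₂ := by
      have e1 : core₁ + replicate (jOf s t L N V (π₁, σ₁)) (vsel s t L π₁) = π₁ := by
        rw [hcore₁e]; exact tsub_add_cancel_of_le hrepl₁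
      have e2 : core₂ + replicate (jOf s t L N V (π₂, σ₂)) (vsel s t L π₂) = π₂ := by
        rw [hcore₂e]; exact tsub_add_cancel_of_le hrepl₂
      rw [← e1, ← e2, hcoreeq, hjeq, hveq]
    exact ⟨hπeq, hσeq⟩
  · -- B vs A : impossible
    exfalso
    rw [if_pos hc₁] at hcase₁
    rw [if_neg hc₂] at hcase₂
    obtain ⟨hr₁, -, -, -, -, -⟩ := hcase₁
    obtain ⟨hr₂, -, -⟩ := hcase₂
    have hdvd : (s+2) ∣ fA s (rk V t N σ₂ + 1) :=
      ⟨(rk V t N σ₁)*L + (vsel s t L π₁ - s), by rw [← hr₂, ← hrr, hr₁]⟩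
    exact fA_not_dvd (by omega) hdvd
  · -- A vs B : impossible
    exfalso
    rw [if_neg hc₁] at hcase₁
    rw [if_pos hc₂] at hcase₂
    obtain ⟨hr₁, -, -⟩ := hcase₁
    obtain ⟨hr₂, -, -, -, -, -⟩ := hcase₂
    have hdvd : (s+2) ∣ fA s (rk V t N σ₁ + 1) :=
      ⟨(rk V t N σ₂)*L + (vsel s t L π₂ - s), by rw [← hr₁, hrr, hr₂]⟩
    exact fA_not_dvd (by omega) hdvd
  · -- both case A
    rw [if_neg hc₁] at hcase₁
    rw [if_neg hc₂] at hcase₂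
    obtain ⟨hr₁, hcore₁e, hd₁e⟩ := hcase₁
    obtain ⟨hr₂, hcore₂e, hd₂e⟩ := hcase₂
    have hieq : rk V t N σ₁ + 1 = rk V t N σ₂ + 1 :=
      (fA_strictMono s).injective (by rw [← hr₁, ← hr₂, hrr])
    have hσeq : σ₁ = σ₂ := rk_inj hσRS₁ hσRS₂ (by omega)
    have hdeq : d₁ = d₂ := by rw [hd₁e, hd₂e, hrr, hσeq]
    have hπeq : π₁ = π₂ := by
      have h := heq
      rw [hphi₁, hphi₂, hrr, hdeq, hcore₁e, hcore₂e] at h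
      exact add_right_cancel (add_right_cancel h)
    exact ⟨hπeq, hσeq⟩

end
end TCP

/-- Let `L, s` be positive integers and `V ⊆ {s+1, …, L+s}` nonempty
with `t = |V|` satisfying `t ≤ (L-2)/2` (i.e. `2t + 2 ≤ L`). Then there is a constant
`M` such that for every `N ≥ M`, the number of partitions of `N` whose smallest part
equals `s` and all of whose parts are `≤ L+s` is at least the number of pairs `(π, σ)`
of (possibly empty) multisets of parts with `|π| + |σ| = N`, where all parts of `π`
lie in `{s+1, …, L+s}`, all parts of `σ` lie in `V`, and each `k ∈ V` occurs in `σ`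
with multiplicity a perfect `t`-th power. -/
theorem two_coloured_partitions_inequality (L s : ℕ) (hL : 0 < L) (hs : 0 < s)
    (V : Finset ℕ) (hV : V ⊆ Finset.Icc (s + 1) (L + s)) (hVne : V.Nonempty)
    (t : ℕ) (ht : t = V.card) (htL : 2 * t + 2 ≤ L) :
    ∃ M : ℕ, ∀ N : ℕ, M ≤ N →
      Nat.card {x : Multiset ℕ × Multiset ℕ //
          (∀ k ∈ x.1, k ∈ Finset.Icc (s + 1) (L + s)) ∧
          (∀ k ∈ x.2, k ∈ V) ∧
          (∀ k ∈ V, ∃ m : ℕ, x.2.count k = m ^ t) ∧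
          x.1.sum + x.2.sum = N} ≤
      Nat.card {p : N.Partition //
          s ∈ p.parts ∧ ∀ x ∈ p.parts, s ≤ x ∧ x ≤ L + s} := by
  classical
  have ht1 : 1 ≤ t := by
    rw [ht]
    exact Finset.card_pos.2 hVne
  have hL4 : 4 ≤ L := by omega
  have hs1 : 1 ≤ s := hs
  refine ⟨TCP.Mc s t L, fun N hN => ?_⟩
  have hprops : ∀ x : {x : Multiset ℕ × Multiset ℕ //
      (∀ k ∈ x.1, k ∈ Finset.Icc (s + 1) (L + s)) ∧
      (∀ k ∈ x.2, k ∈ V) ∧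
      (∀ k ∈ V, ∃ m : ℕ, x.2.count k = m ^ t) ∧
      x.1.sum + x.2.sum = N},
      (TCP.phi s t L N V x.1).sum = N ∧ (∀ i ∈ TCP.phi s t L N V x.1, 0 < i) ∧
      s ∈ TCP.phi s t L N V x.1 ∧
      (∀ k ∈ TCP.phi s t L N V x.1, s ≤ k ∧ k ≤ L + s) := by
    rintro ⟨⟨π, σ⟩, hπ, hσ, hpow, hsum⟩
    obtain ⟨core, d, hphi, hd, hcoreI, hsumN, hrpos, -⟩ :=
      TCP.phi_spec hL4 hs1 hV ht ht1 hN π σ hπ hσ hpow hsum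
    have hbounds : ∀ k ∈ TCP.phi s t L N V (π, σ), s ≤ k ∧ k ≤ L + s := by
      intro k hk
      rw [hphi] at hk
      rcases Multiset.mem_add.1 hk with hk | hk
      · rcases Multiset.mem_add.1 hk with hk | hk
        · have := Finset.mem_Icc.1 (hcoreI k hk)
          omega
        · have := Multiset.eq_of_mem_replicate hk
          omega
      · rcases TCP.wms_mem hk with h | h <;> omega
    refine ⟨?_, ?_, ?_, hbounds⟩
    · rw [hphi, Multiset.sum_add, Multiset.sum_add, Multiset.sum_replicate,
        smul_eq_mul, TCP.wms_sum hd]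
      omega
    · intro i hi
      have := hbounds i hi
      omega
    · rw [hphi]
      refine Multiset.mem_add.2 (Or.inl (Multiset.mem_add.2 (Or.inr ?_)))
      rw [Multiset.mem_replicate]
      exact ⟨by omega, rfl⟩
  apply Nat.card_le_card_of_injective
    (fun x => (⟨⟨TCP.phi s t L N V x.1, fun {i} hi => (hprops x).2.1 i hi,
        (hprops x).1⟩,
      (hprops x).2.2.1, (hprops x).2.2.2⟩ :
      {p : N.Partition // s ∈ p.parts ∧ ∀ x ∈ p.parts, s ≤ x ∧ x ≤ L + s}))
  rintro ⟨⟨π₁, σ₁⟩, hπ₁, hσ₁, hpow₁, hsum₁⟩ ⟨⟨π₂, σ₂⟩, hπ₂, hσ₂, hpow₂, hsum₂⟩ hf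
  have hparts : TCP.phi s t L N V (π₁, σ₁) = TCP.phi s t L N V (π₂, σ₂) := by
    have := congrArg (fun q : {p : N.Partition //
        s ∈ p.parts ∧ ∀ x ∈ p.parts, s ≤ x ∧ x ≤ L + s} => q.1.parts) hf
    simpa using this
  obtain ⟨hπeq, hσeq⟩ := TCP.phi_inj hL4 hs1 hV ht ht1 hN
    hπ₁ hσ₁ hpow₁ hsum₁ hπ₂ hσ₂ hpow₂ hsum₂ hparts
  apply Subtype.ext
  exact Prod.ext hπeq hσeq
end
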